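/- arXiv:1606.09097 — 8 statements merged into one kernel-verified Lean document; each statement's English description precedes it below -/
import Mathlib

section
/- For every positive integer n there exist a constant c > 0 and a threshold k₀ such that for every integer k ≥ k₀, the number of finite-index subgroups N of ℤⁿ with diam(ℤⁿ/N) ≤ k is at least c·k^{n²}. -/
/-!
For `a ≥ 1` and `D = 2na + 1`, every `n × n` matrix `A` with entries in `[0, a)` gives the
lattice spanned by the rows of `D • 1 + A`. These rows are diagonally dominant, so a vector of
minimal ℓ¹-norm in a coset cannot be shortened by adding a row: its coordinates are below
`D + a`, and the quotient has diameter `O(n² a)`. Conversely, an integer combination of the rows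
lying within distance `a` of another row of this shape is that row, so the `a^(n²)` lattices are
pairwise distinct. Taking `a ≈ k / (2n² + n + 1)` gives `≫ k^(n²)` subgroups. Since `Set.ncard`
of an infinite set is `0`, one also needs finiteness: all these subgroups have index at most the
size of the ℓ¹-ball of radius `k`, hence contain `B! • ℤⁿ` for that bound `B`.
-/

open Matrix

section SubgroupsOfBoundedIndex

variable {G : Type*} [AddCommGroup G]

theorem AddSubgroup.finite_setOf_index_le [Module.Free ℤ G] [Module.Finite ℤ G] (B : ℕ) :
    {N : AddSubgroup G | N.FiniteIndex ∧ N.index ≤ B}.Finite := by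
  set R := (nsmulAddMonoidHom (α := G) B.factorial).range
  have : R.FiniteIndex := ⟨by simp [R, AddSubgroup.index_range_nsmul, Nat.factorial_ne_zero]⟩
  have hR : ∀ N ∈ {N : AddSubgroup G | N.FiniteIndex ∧ N.index ≤ B}, R ≤ N := by
    rintro N ⟨hN, hNB⟩ _ ⟨x, rfl⟩
    obtain ⟨m, hm⟩ := Nat.dvd_factorial (Nat.pos_of_ne_zero hN.index_ne_zero) hNB
    simpa [hm, mul_nsmul] using N.nsmul_mem (N.nsmul_index_mem x) m
  refine Set.Finite.of_finite_image (f := AddSubgroup.map (QuotientAddGroup.mk' R))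
    (Set.toFinite _) fun N hN N' hN' h => ?_
  exact AddSubgroup.map_injective_of_ker_le _ (by simpa using hR N hN) (by simpa using hR N' hN') h

theorem AddSubgroup.finiteIndex_and_index_le_of_forall_exists_sub_mem {N : AddSubgroup G}
    {s : Set G} (hs : s.Finite) (h : ∀ y, ∃ z ∈ s, y - z ∈ N) :
    N.FiniteIndex ∧ N.index ≤ s.ncard := by
  have : Finite s := hs
  have hsurj : Function.Surjective (fun z : s => (z : G ⧸ N)) := by
    intro q
    induction q using QuotientAddGroup.induction_on with | H y => ?_
    obtain ⟨z, hz, hyz⟩ := h y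
    exact ⟨⟨z, hz⟩, QuotientAddGroup.eq.mpr (by rwa [neg_add_eq_sub])⟩
  have : Finite (G ⧸ N) := Finite.of_surjective _ hsurj
  exact ⟨AddSubgroup.finiteIndex_of_finite_quotient,
    (Nat.card_le_card_of_surjective _ hsurj).trans_eq (Nat.card_coe_set_eq s)⟩

end SubgroupsOfBoundedIndex

theorem exists_abs_sub_mul_add_abs_le {z w : ℤ} (h : |w| ≤ |z|) :
    ∃ s : ℤ, |s| = 1 ∧ |z - s * w| + |w| ≤ |z| := by
  have key : ∀ s : ℤ, |s| = 1 → -(|z| - |w|) ≤ z - s * w → z - s * w ≤ |z| - |w| →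
      ∃ s : ℤ, |s| = 1 ∧ |z - s * w| + |w| ≤ |z| := fun s hs h₁ h₂ =>
    ⟨s, hs, by linarith [abs_le.mpr ⟨h₁, h₂⟩]⟩
  rcases abs_cases z with ⟨hz, -⟩ | ⟨hz, -⟩ <;> rcases abs_cases w with ⟨hw, -⟩ | ⟨hw, -⟩ <;>
    first
    | exact key 1 abs_one (by linarith) (by linarith)
    | exact key (-1) (by norm_num) (by linarith) (by linarith)

variable {ι : Type*} [Fintype ι]

theorem finite_setOf_sum_abs_le (k : ℤ) : {z : ι → ℤ | ∑ i, |z i| ≤ k}.Finite := by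
  refine (Set.Finite.pi fun _ : ι => Set.finite_Icc (-k) k).subset fun z hz i _ => ?_
  exact abs_le.mp
    ((Finset.single_le_sum (fun i _ => abs_nonneg (z i)) (Finset.mem_univ i)).trans hz)

theorem exists_sum_abs_sub_smul_lt {z w : ι → ℤ} {i : ι} (hi : |w i| ≤ |z i|)
    (hdom : ∑ j, |w j| < 2 * |w i|) : ∃ s : ℤ, ∑ j, |(z - s • w) j| < ∑ j, |z j| := by
  classical
  obtain ⟨s, hs, hsi⟩ := exists_abs_sub_mul_add_abs_le hi
  refine ⟨s, ?_⟩
  have hrest : ∑ j ∈ Finset.univ.erase i, |(z - s • w) j| ≤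
      ∑ j ∈ Finset.univ.erase i, (|z j| + |w j|) :=
    Finset.sum_le_sum fun j _ => (abs_sub _ _).trans_eq (by simp [abs_mul, hs])
  rw [← Finset.add_sum_erase _ _ (Finset.mem_univ i)] at hdom ⊢
  rw [← Finset.add_sum_erase _ _ (Finset.mem_univ i), Finset.sum_add_distrib] at *
  simp only [Pi.sub_apply, Pi.smul_apply, smul_eq_mul] at *
  linarith

theorem exists_sub_mem_forall_abs_lt {N : AddSubgroup (ι → ℤ)} {M : Matrix ι ι ℤ}
    (hM : ∀ i, M i ∈ N) (hdom : ∀ i, ∑ j, |M i j| < 2 * |M i i|) (y : ι → ℤ) :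
    ∃ z, y - z ∈ N ∧ ∀ i, |z i| < |M i i| := by
  -- a representative of minimal ℓ¹-norm cannot be shortened by a row of `M`
  obtain ⟨z, hz, hmin⟩ := (InvImage.wf (fun z : ι → ℤ => (∑ i, |z i|).toNat)
    wellFounded_lt).has_min {z | y - z ∈ N} ⟨y, by simp⟩
  refine ⟨z, hz, fun i => lt_of_not_ge fun hi => ?_⟩
  obtain ⟨s, hs⟩ := exists_sum_abs_sub_smul_lt hi (hdom i)
  refine hmin (z - s • M i) ?_ ?_
  · simpa [sub_sub_eq_add_sub, add_sub_right_comm] using add_mem hz (N.zsmul_mem (hM i) s)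
  · have := Finset.sum_nonneg fun j (_ : j ∈ Finset.univ) => abs_nonneg ((z - s • M i) j)
    show (∑ j, |(z - s • M i) j|).toNat < (∑ j, |z j|).toNat
    omega

theorem abs_vecMul_apply_le {A : Matrix ι ι ℤ} {b : ℤ} (hA : ∀ i j, |A i j| ≤ b)
    (u : ι → ℤ) (j : ι) : |(u ᵥ* A) j| ≤ (∑ i, |u i|) * b :=
  calc |(u ᵥ* A) j| ≤ ∑ i, |u i * A i j| := Finset.abs_sum_le_sum_abs _ _
    _ ≤ ∑ i, |u i| * b := Finset.sum_le_sum fun i _ => by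
        rw [abs_mul]; exact mul_le_mul_of_nonneg_left (hA i j) (abs_nonneg _)
    _ = (∑ i, |u i|) * b := (Finset.sum_mul ..).symm

def rowLattice (M : Matrix ι ι ℤ) : AddSubgroup (ι → ℤ) :=
  (LinearMap.range M.vecMulLinear).toAddSubgroup

theorem mem_rowLattice {M : Matrix ι ι ℤ} {v : ι → ℤ} : v ∈ rowLattice M ↔ ∃ c, c ᵥ* M = v :=
  LinearMap.mem_range

variable (ι) in
def boundedDiamSubgroups (k : ℕ) : Set (AddSubgroup (ι → ℤ)) :=
  {N | N.FiniteIndex ∧ ∀ y : ι → ℤ, ∃ z : ι → ℤ, y - z ∈ N ∧ (∑ i, |z i|) ≤ (k : ℤ)}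

theorem finite_boundedDiamSubgroups (k : ℕ) : (boundedDiamSubgroups ι k).Finite :=
  (AddSubgroup.finite_setOf_index_le _).subset fun _ ⟨hN, h⟩ =>
    ⟨hN, (AddSubgroup.finiteIndex_and_index_le_of_forall_exists_sub_mem
      (finite_setOf_sum_abs_le (k : ℤ)) fun y => (h y).imp fun _ => And.symm).2⟩

variable [DecidableEq ι]

theorem row_mem_rowLattice (M : Matrix ι ι ℤ) (i : ι) : M i ∈ rowLattice M :=
  mem_rowLattice.mpr ⟨Pi.single i 1, single_one_vecMul i M⟩

omit [Fintype ι] in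
theorem smul_one_add_apply (D : ℤ) (A : Matrix ι ι ℤ) (i j : ι) :
    (D • 1 + A) i j = (if i = j then D else 0) + A i j := by
  simp only [Matrix.add_apply, Matrix.smul_apply, Matrix.one_apply, smul_eq_mul, mul_ite, mul_one,
    mul_zero]

theorem eq_zero_of_forall_abs_vecMul_le {A : Matrix ι ι ℤ} {b D : ℤ} (hA : ∀ i j, |A i j| ≤ b)
    (hD : 2 * Fintype.card ι * b < D) {u : ι → ℤ} (hu : ∀ j, |(u ᵥ* (D • 1 + A)) j| ≤ b) :
    u = 0 := by
  by_contra hu0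
  obtain ⟨j₀, hj₀⟩ := Function.ne_iff.mp hu0
  set S := ∑ i, |u i|
  have hb : 0 ≤ b := (abs_nonneg _).trans (hu j₀)
  have hS : 1 ≤ S := (Int.one_le_abs hj₀).trans
    (Finset.single_le_sum (fun i _ => abs_nonneg (u i)) (Finset.mem_univ j₀))
  have hD0 : 0 ≤ D := by nlinarith
  have hcoord : ∀ j, D * |u j| ≤ b + S * b := fun j => by
    have h := hu j
    rw [vecMul_add, vecMul_smul, vecMul_one, Pi.add_apply, Pi.smul_apply, smul_eq_mul] at h
    have := abs_vecMul_apply_le hA u j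
    rw [← abs_of_nonneg hD0, ← abs_mul]
    calc |D * u j| = |(D * u j + (u ᵥ* A) j) - (u ᵥ* A) j| := by ring_nf
      _ ≤ |D * u j + (u ᵥ* A) j| + |(u ᵥ* A) j| := abs_sub _ _
      _ ≤ b + S * b := by linarith
  have hsum : D * S ≤ Fintype.card ι * (b + S * b) :=
    calc D * S = ∑ j, D * |u j| := Finset.mul_sum ..
      _ ≤ ∑ _j : ι, (b + S * b) := Finset.sum_le_sum fun j _ => hcoord j
      _ = Fintype.card ι * (b + S * b) := by simp
  nlinarith

theorem eq_of_rowLattice_smul_one_add_eq {A A' : Matrix ι ι ℤ} {b D : ℤ}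
    (hA : ∀ i j, 0 ≤ A i j ∧ A i j ≤ b) (hA' : ∀ i j, 0 ≤ A' i j ∧ A' i j ≤ b)
    (hD : 2 * Fintype.card ι * b < D) (h : rowLattice (D • 1 + A) = rowLattice (D • 1 + A')) :
    A = A' := by
  funext i
  have hmem : (D • 1 + A') i ∈ rowLattice (D • 1 + A) := by
    rw [h]; exact row_mem_rowLattice _ i
  obtain ⟨c, hc⟩ := mem_rowLattice.mp hmem
  have hAb : ∀ i j, |A i j| ≤ b := fun i j => abs_le.mpr ⟨by linarith [hA i j], (hA i j).2⟩
  have hc_single : c - Pi.single i 1 = 0 := by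
    refine eq_zero_of_forall_abs_vecMul_le hAb hD fun j => ?_
    rw [sub_vecMul, hc, single_one_vecMul]
    simp only [Pi.sub_apply, Matrix.row, smul_one_add_apply, add_sub_add_left_eq_sub]
    exact abs_le.mpr ⟨by linarith [hA i j, hA' i j], by linarith [hA i j, hA' i j]⟩
  rw [sub_eq_zero.mp hc_single, single_one_vecMul] at hc
  funext j
  simpa [smul_one_add_apply] using congrFun hc j

theorem exists_sub_mem_rowLattice_sum_abs_le {A : Matrix ι ι ℤ} {b D : ℤ}
    (hA : ∀ i j, 0 ≤ A i j ∧ A i j ≤ b) (hD : Fintype.card ι * b < D) (y : ι → ℤ) :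
    ∃ z, y - z ∈ rowLattice (D • 1 + A) ∧ ∑ i, |z i| ≤ Fintype.card ι * (D + b) := by
  have hD0 : ∀ i : ι, 0 ≤ D := fun i => by
    nlinarith [mul_nonneg (Nat.cast_nonneg (Fintype.card ι)) ((hA i i).1.trans (hA i i).2)]
  have habs : ∀ i j, |(D • 1 + A) i j| = (if i = j then D else 0) + A i j := fun i j => by
    rw [smul_one_add_apply, abs_of_nonneg]
    split_ifs <;> linarith [hA i j, hD0 i]
  have hdom : ∀ i, ∑ j, |(D • 1 + A) i j| < 2 * |(D • 1 + A) i i| := fun i => by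
    have hrow : ∑ j, A i j ≤ Fintype.card ι * b := by
      simpa using Finset.sum_le_sum fun j (_ : j ∈ Finset.univ) => (hA i j).2
    simp only [habs, Finset.sum_add_distrib, Finset.sum_ite_eq, Finset.mem_univ, if_true]
    linarith [hA i i]
  obtain ⟨z, hz, hlt⟩ := exists_sub_mem_forall_abs_lt (row_mem_rowLattice _) hdom y
  refine ⟨z, hz, ?_⟩
  calc ∑ i, |z i| ≤ ∑ _i : ι, (D + b) := Finset.sum_le_sum fun i _ => by
        have := habs i i
        rw [if_pos rfl] at this
        linarith [hlt i, (hA i i).2]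
    _ = Fintype.card ι * (D + b) := by simp

theorem pow_le_ncard_boundedDiamSubgroups (a k : ℕ)
    (hk : Fintype.card ι * (2 * Fintype.card ι + 1) * a ≤ k) :
    a ^ (Fintype.card ι ^ 2) ≤ (boundedDiamSubgroups ι k).ncard := by
  set n := Fintype.card ι
  set D : ℤ := 2 * n * a + 1
  have hD : 2 * (n : ℤ) * (a - 1) < D := by linarith
  let lattice (A : Matrix ι ι (Fin a)) : AddSubgroup (ι → ℤ) :=
    rowLattice (D • 1 + A.map fun x => ((x : ℕ) : ℤ))
  have hA : ∀ (A : Matrix ι ι (Fin a)) i j,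
      0 ≤ ((A i j : ℕ) : ℤ) ∧ ((A i j : ℕ) : ℤ) ≤ (a : ℤ) - 1 := fun A i j =>
    ⟨Int.natCast_nonneg _, by have := (A i j).isLt; omega⟩
  have hinj : Function.Injective lattice := fun A A' h => by
    have := eq_of_rowLattice_smul_one_add_eq (hA A) (hA A') hD h
    ext i j
    simpa using congrFun (congrFun this i) j
  have hsub : Set.range lattice ⊆ boundedDiamSubgroups ι k := by
    rintro _ ⟨A, rfl⟩
    have hdiam : ∀ y, ∃ z, y - z ∈ lattice A ∧ ∑ i, |z i| ≤ (k : ℤ) := fun y => by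
      obtain ⟨z, hz, hzk⟩ := exists_sub_mem_rowLattice_sum_abs_le (D := D) (hA A) (by nlinarith) y
      refine ⟨z, hz, hzk.trans ?_⟩
      have : ((n * (2 * n + 1) * a : ℕ) : ℤ) ≤ k := by exact_mod_cast hk
      push_cast at this
      linarith
    exact ⟨(AddSubgroup.finiteIndex_and_index_le_of_forall_exists_sub_mem
      (finite_setOf_sum_abs_le (k : ℤ)) fun y => (hdiam y).imp fun _ => And.symm).1, hdiam⟩
  calc a ^ (n ^ 2) = (Set.range lattice).ncard := by
        rw [Set.ncard_range_of_injective hinj, Matrix, Nat.card_fun, Nat.card_fun, Nat.card_fin,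
          Nat.card_eq_fintype_card, ← pow_mul, sq]
    _ ≤ (boundedDiamSubgroups ι k).ncard := Set.ncard_le_ncard hsub (finite_boundedDiamSubgroups k)

theorem div_two_mul_le_natCast_div {m k : ℕ} (hm : 0 < m) (hk : m ≤ k) :
    (k : ℝ) / (2 * m) ≤ (k / m : ℕ) := by
  have hq : 1 ≤ k / m := (Nat.one_le_div_iff hm).mpr hk
  have hk2 : k ≤ k / m * (2 * m) := by
    have := Nat.div_add_mod k m
    have := Nat.mod_lt k hm
    nlinarith
  rw [div_le_iff₀ (by positivity)]
  exact_mod_cast hk2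

theorem stmt0_general (n : ℕ) :
    ∃ c : ℝ, 0 < c ∧ ∃ k₀ : ℕ, ∀ k : ℕ, k₀ ≤ k →
      c * (k : ℝ) ^ (n ^ 2) ≤
        (({N : AddSubgroup (Fin n → ℤ) | N.FiniteIndex ∧
            ∀ y : Fin n → ℤ, ∃ z : Fin n → ℤ, y - z ∈ N ∧ (∑ i, |z i|) ≤ (k : ℤ)}.ncard : ℝ)) := by
  obtain ⟨m, hm⟩ : ∃ m, m = 2 * n ^ 2 + n + 1 := ⟨_, rfl⟩
  refine ⟨(2 * (m : ℝ))⁻¹ ^ (n ^ 2), by rw [hm]; positivity, m, fun k hk => ?_⟩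
  have hcount := pow_le_ncard_boundedDiamSubgroups (ι := Fin n) (k / m) k <| by
    simp only [Fintype.card_fin]
    exact le_trans (Nat.mul_le_mul_right _ (by nlinarith)) (Nat.mul_div_le k m)
  rw [Fintype.card_fin] at hcount
  calc (2 * (m : ℝ))⁻¹ ^ (n ^ 2) * (k : ℝ) ^ (n ^ 2) = ((k : ℝ) / (2 * m)) ^ (n ^ 2) := by
        rw [← mul_pow, inv_mul_eq_div]
    _ ≤ ((k / m : ℕ) : ℝ) ^ (n ^ 2) := by
        gcongr
        exact div_two_mul_le_natCast_div (by omega) hk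
    _ ≤ ((boundedDiamSubgroups (Fin n) k).ncard : ℝ) := by exact_mod_cast hcount

/-- For every positive integer `n` there exist a constant `c > 0` and a
threshold `k₀` such that for every integer `k ≥ k₀`, the number of finite-index subgroups
`N` of `ℤⁿ` with `diam(ℤⁿ/N) ≤ k` (every coset of `N` contains a vector of ℓ¹-norm
at most `k`) is at least `c · k ^ (n²)`. -/
theorem stmt0 (n : ℕ) (hn : 0 < n) :
    ∃ c : ℝ, 0 < c ∧ ∃ k₀ : ℕ, ∀ k : ℕ, k₀ ≤ k →
      c * (k : ℝ) ^ (n ^ 2) ≤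
        (({N : AddSubgroup (Fin n → ℤ) | N.FiniteIndex ∧
            ∀ y : Fin n → ℤ, ∃ z : Fin n → ℤ, y - z ∈ N ∧ (∑ i, |z i|) ≤ (k : ℤ)}.ncard : ℝ)) :=
  stmt0_general n
end

section
/- Let n ≥ 1 be an integer and k > 0. Suppose x₁,…,xₙ and x′₁,…,x′ₙ are vectors in ℤⁿ satisfying k/(2n) < x_{ii} ≤ k/n and |x_{ij}| ≤ k/(2n²) for all i ≠ j (and the same inequalities for the x′ᵢ), where xᵢ = (x_{i1},…,x_{in}). If the subgroup of ℤⁿ generated by x₁,…,xₙ equals the subgroup generated by x′₁,…,x′ₙ, then xᵢ = x′ᵢ for every i. -/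
/-!
Put `A = k/(2n²)`, so that every diagonal entry exceeds `nA` and every off-diagonal entry is at
most `A`. For a lattice vector `w = ∑ c_j x_j`, isolating the term `c_p x_pp` of its `p`-th
coordinate gives `|c_p| (x_pp + A) - A ∑_j |c_j| ≤ |w_p|`. Applied where `|c_p|` is maximal, this
shows that a nonzero lattice vector with `|w_j| ≤ 2A` for `j ≠ i` has `|c_i|` maximal and
`|w_i| ≥ x_ii - (n-1)A`. The vector `x'_i - x_i` lies in both lattices and is of this kind, so
`|x'_ii - x_ii| ≥ max(x_ii, x'_ii) - (n-1)A`, which is impossible as both entries exceed `nA`.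
-/

open Finset

variable {ι : Type*} [Fintype ι]

lemma abs_mul_diag_sub_le_abs_sum_mul {x : ι → ι → ℝ} {A : ℝ}
    (hoff : ∀ p q, p ≠ q → |x p q| ≤ A) (c : ι → ℝ) (p : ι) :
    |c p| * (|x p p| + A) - A * ∑ j, |c j| ≤ |∑ j, c j * x j p| := by
  classical
  have hrest : |∑ j ∈ univ.erase p, c j * x j p| ≤ A * ∑ j ∈ univ.erase p, |c j| := by
    rw [mul_sum]
    refine (abs_sum_le_sum_abs _ _).trans (sum_le_sum fun j hj => ?_)
    rw [abs_mul, mul_comm A]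
    exact mul_le_mul_of_nonneg_left (hoff j p (ne_of_mem_erase hj)) (abs_nonneg _)
  rw [← add_sum_erase univ _ (mem_univ p), ← add_sum_erase univ _ (mem_univ p)]
  have := abs_add_le (c p * x p p + ∑ j ∈ univ.erase p, c j * x j p)
    (-∑ j ∈ univ.erase p, c j * x j p)
  rw [abs_neg, add_neg_cancel_right, abs_mul] at this
  linarith

variable (ι) in
def IsNearDiagonal (A : ℝ) (x : ι → ι → ℤ) : Prop :=
  (∀ p, (Fintype.card ι : ℝ) * A < x p p) ∧ ∀ p q, p ≠ q → |(x p q : ℝ)| ≤ A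

theorem IsNearDiagonal.sub_le_abs_apply_of_mem_closure {A : ℝ} (hA : 0 ≤ A) {x : ι → ι → ℤ}
    (hx : IsNearDiagonal ι A x) {w : ι → ℤ} (hw : w ∈ AddSubgroup.closure (Set.range x))
    (hw0 : w ≠ 0) {i : ι} (hwi : ∀ j, j ≠ i → |(w j : ℝ)| ≤ 2 * A) :
    (x i i : ℝ) - (Fintype.card ι - 1) * A ≤ |(w i : ℝ)| := by
  rw [← Submodule.span_int_eq_addSubgroupClosure, Submodule.mem_toAddSubgroup,
    Submodule.mem_span_range_iff_exists_fun] at hw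
  obtain ⟨c, rfl⟩ := hw
  have hrow (p : ι) :
      (|c p| : ℝ) * (x p p + A) - A * ∑ j, (|c j| : ℝ) ≤ |((∑ j, c j • x j) p : ℝ)| := by
    have := abs_mul_diag_sub_le_abs_sum_mul (x := fun p q => (x p q : ℝ)) hx.2
      (fun j => (c j : ℝ)) p
    have hxp : (0 : ℝ) ≤ x p p := by nlinarith [hx.1 p, (Fintype.card ι).cast_nonneg (α := ℝ)]
    push_cast [Finset.sum_apply]
    simpa [abs_of_nonneg hxp] using this
  have : Nonempty ι := ⟨i⟩
  obtain ⟨p, hp⟩ := Finite.exists_max (fun j => |c j|)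
  have hm : 1 ≤ |c p| := by
    by_contra! h
    have hc : c = 0 := funext fun j => Int.abs_lt_one_iff.1 ((hp j).trans_lt h)
    exact hw0 (by simp [hc])
  have hle (j : ι) : |(c j : ℝ)| ≤ |(c p : ℝ)| := by exact_mod_cast hp j
  have hm' : (1 : ℝ) ≤ |(c p : ℝ)| := by exact_mod_cast hm
  have hdiag := hx.1
  by_cases hi : |c i| = |c p|
  · have hsum : ∑ j, (|c j| : ℝ) ≤ Fintype.card ι * |(c p : ℝ)| := by
      simpa using sum_le_sum fun j (_ : j ∈ univ) => hle j
    have hi' : |(c i : ℝ)| = |(c p : ℝ)| := by exact_mod_cast hi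
    have := hrow i
    rw [hi'] at this
    nlinarith [mul_le_mul_of_nonneg_left hsum hA,
      mul_nonneg (sub_nonneg.2 hm') (sub_nonneg.2 (hdiag i).le)]
  · classical
    have hpi : p ≠ i := by rintro rfl; exact hi rfl
    have hci : |(c i : ℝ)| ≤ |(c p : ℝ)| - 1 := by
      have : |c i| ≤ |c p| - 1 := by have := hp i; omega
      exact_mod_cast this
    have hsum : ∑ j, (|c j| : ℝ) ≤ Fintype.card ι * |(c p : ℝ)| - 1 := by
      rw [← add_sum_erase univ _ (mem_univ i)]
      have := sum_le_sum fun j (_ : j ∈ univ.erase i) => hle j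
      rw [sum_const, card_erase_of_mem (mem_univ i), card_univ, nsmul_eq_mul,
        Nat.cast_pred Fintype.card_pos] at this
      linarith
    have := hrow p
    have := hwi p hpi
    nlinarith [mul_le_mul_of_nonneg_left hsum hA, hdiag p,
      mul_nonneg (sub_nonneg.2 hm') (sub_nonneg.2 (hdiag p).le), mul_nonneg (sub_nonneg.2 hm') hA]

theorem IsNearDiagonal.sub_le_abs_sub_of_mem_closure {A : ℝ} (hA : 0 ≤ A) {x : ι → ι → ℤ}
    (hx : IsNearDiagonal ι A x) {i : ι} {y : ι → ℤ} (hy : ∀ j, j ≠ i → |(y j : ℝ)| ≤ A)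
    (hmem : y ∈ AddSubgroup.closure (Set.range x)) (hne : y ≠ x i) :
    (x i i : ℝ) - (Fintype.card ι - 1) * A ≤ |(y i : ℝ) - x i i| := by
  have hsmall (j : ι) (hj : j ≠ i) : |((y - x i) j : ℝ)| ≤ 2 * A := by
    push_cast [Pi.sub_apply]
    linarith [abs_sub (y j : ℝ) (x i j), hy j hj, hx.2 i j hj.symm]
  have := hx.sub_le_abs_apply_of_mem_closure hA
    (sub_mem hmem (AddSubgroup.subset_closure ⟨i, rfl⟩)) (sub_ne_zero.2 hne) hsmall
  push_cast [Pi.sub_apply] at this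
  exact this

theorem IsNearDiagonal.eq_of_closure_range_eq {A : ℝ} (hA : 0 ≤ A) {x x' : ι → ι → ℤ}
    (hx : IsNearDiagonal ι A x) (hx' : IsNearDiagonal ι A x')
    (hgen : AddSubgroup.closure (Set.range x) = AddSubgroup.closure (Set.range x')) :
    x = x' := by
  funext i
  by_contra hne
  have h := hx.sub_le_abs_sub_of_mem_closure hA (fun j hj => hx'.2 i j hj.symm)
    (hgen ▸ AddSubgroup.subset_closure ⟨i, rfl⟩) (Ne.symm hne)
  have h' := hx'.sub_le_abs_sub_of_mem_closure hA (fun j hj => hx.2 i j hj.symm)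
    (hgen ▸ AddSubgroup.subset_closure ⟨i, rfl⟩) hne
  rw [abs_sub_comm] at h'
  rcases abs_cases ((x' i i : ℝ) - x i i) with ⟨habs, -⟩ | ⟨habs, -⟩ <;>
    nlinarith [hx.1 i, hx'.1 i]

theorem stmt1_general (n : ℕ) (k : ℝ) (hk : 0 < k)
    (x x' : Fin n → (Fin n → ℤ))
    (hxdiag : ∀ i : Fin n, k / (2 * n) < (x i i : ℝ) ∧ (x i i : ℝ) ≤ k / n)
    (hxoff : ∀ i j : Fin n, i ≠ j → |(x i j : ℝ)| ≤ k / (2 * n ^ 2))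
    (hx'diag : ∀ i : Fin n, k / (2 * n) < (x' i i : ℝ) ∧ (x' i i : ℝ) ≤ k / n)
    (hx'off : ∀ i j : Fin n, i ≠ j → |(x' i j : ℝ)| ≤ k / (2 * n ^ 2))
    (hgen : AddSubgroup.closure (Set.range x) = AddSubgroup.closure (Set.range x')) :
    x = x' := by
  rcases Nat.eq_zero_or_pos n with rfl | hn
  · exact Subsingleton.elim x x'
  have hnA : (Fintype.card (Fin n) : ℝ) * (k / (2 * n ^ 2)) = k / (2 * n) := by
    rw [Fintype.card_fin]
    field_simp
  exact IsNearDiagonal.eq_of_closure_range_eq (by positivity)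
    ⟨fun i => hnA ▸ (hxdiag i).1, hxoff⟩ ⟨fun i => hnA ▸ (hx'diag i).1, hx'off⟩ hgen

/-- Let `n ≥ 1` and `k > 0`. If `x₁,…,xₙ` and `x′₁,…,x′ₙ` are vectors in `ℤⁿ`
with `k/(2n) < x_{ii} ≤ k/n` and `|x_{ij}| ≤ k/(2n²)` for `i ≠ j` (and likewise for the
`x′ᵢ`), and if they generate the same subgroup of `ℤⁿ`, then `xᵢ = x′ᵢ` for every `i`. -/
theorem stmt1 (n : ℕ) (hn : 1 ≤ n) (k : ℝ) (hk : 0 < k)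
    (x x' : Fin n → (Fin n → ℤ))
    (hxdiag : ∀ i : Fin n, k / (2 * n) < (x i i : ℝ) ∧ (x i i : ℝ) ≤ k / n)
    (hxoff : ∀ i j : Fin n, i ≠ j → |(x i j : ℝ)| ≤ k / (2 * n ^ 2))
    (hx'diag : ∀ i : Fin n, k / (2 * n) < (x' i i : ℝ) ∧ (x' i i : ℝ) ≤ k / n)
    (hx'off : ∀ i j : Fin n, i ≠ j → |(x' i j : ℝ)| ≤ k / (2 * n ^ 2))
    (hgen : AddSubgroup.closure (Set.range x) = AddSubgroup.closure (Set.range x')) :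
    x = x' :=
  stmt1_general n k hk x x' hxdiag hxoff hx'diag hx'off hgen
end

section
/- Let n ≥ 1 be an integer and k > 0. Suppose x₁,…,xₙ are vectors in ℤⁿ satisfying k/(2n) < x_{ii} ≤ k/n and |x_{ij}| ≤ k/(2n²) for all i ≠ j, where xᵢ = (x_{i1},…,x_{in}), and let N be the subgroup of ℤⁿ generated by x₁,…,xₙ. Then for every y ∈ ℤⁿ there exists z ∈ ℤⁿ with y − z ∈ N and ‖z‖₁ ≤ k, i.e. diam(ℤⁿ/N) ≤ k in the ℓ¹ word metric. -/
/-!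
Greedy descent in the ℓ¹ norm. If `‖y‖₁ > k`, some coordinate has `|yᵢ| > k/n ≥ xᵢᵢ`.
Subtracting `sign(yᵢ) • xᵢ` lowers `|yᵢ|` by exactly `xᵢᵢ` and raises the other coordinates by
at most `∑_{j ≠ i} |xᵢⱼ| ≤ k/(2n) < xᵢᵢ` in total, so the norm strictly drops while the coset
is unchanged. Since the norm is a natural number, the descent stops at a representative of
norm at most `k`.
-/

open Finset

theorem AddSubgroup.exists_sub_mem_sum_abs_le {ι : Type*} [Fintype ι]
    (N : AddSubgroup (ι → ℤ)) (B : ℝ)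
    (hstep : ∀ y : ι → ℤ, B < ((∑ i, |y i| : ℤ) : ℝ) →
      ∃ v ∈ N, ∑ i, |(y - v) i| < ∑ i, |y i|)
    (y : ι → ℤ) : ∃ z : ι → ℤ, y - z ∈ N ∧ ((∑ i, |z i| : ℤ) : ℝ) ≤ B := by
  induction hm : (∑ i, |y i|).toNat using Nat.strong_induction_on generalizing y with
  | _ m ih =>
    by_cases hy : ((∑ i, |y i| : ℤ) : ℝ) ≤ B
    · exact ⟨y, by simp, hy⟩
    obtain ⟨v, hvN, hv⟩ := hstep y (not_le.mp hy)
    have hlt : (∑ i, |(y - v) i|).toNat < m := by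
      rw [← hm]
      exact (Int.toNat_lt_toNat (hv.trans_le' (sum_nonneg fun i _ => abs_nonneg _))).mpr hv
    obtain ⟨z, hzN, hz⟩ := ih _ hlt (y - v) rfl
    refine ⟨z, ?_, hz⟩
    convert N.add_mem hvN hzN using 1
    abel

theorem Fintype.exists_div_card_lt_of_lt_sum {ι : Type*} [Fintype ι] {B : ℝ} (hB : 0 ≤ B)
    (f : ι → ℝ) (h : B < ∑ i, f i) : ∃ i, B / Fintype.card ι < f i := by
  have hconst : ∑ _i : ι, B / Fintype.card ι ≤ B := by
    rw [sum_const, card_univ, nsmul_eq_mul]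
    rcases (Fintype.card ι).eq_zero_or_pos with h0 | hpos
    · simpa [h0] using hB
    · rw [mul_div_cancel₀ _ (by positivity)]
  obtain ⟨i, -, hi⟩ := exists_lt_of_sum_lt (hconst.trans_lt h)
  exact ⟨i, hi⟩

theorem sum_erase_abs_lt_of_abs_le {ι : Type*} [Fintype ι] [DecidableEq ι]
    (v : ι → ℤ) (i : ι) {c : ℝ} (hc : 0 ≤ c) (hoff : ∀ j, i ≠ j → |(v j : ℝ)| ≤ c)
    (hdiag : Fintype.card ι * c < v i) : ∑ j ∈ univ.erase i, |v j| < v i := by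
  have hcard : ((univ.erase i).card : ℝ) ≤ Fintype.card ι := by
    exact_mod_cast (card_erase_le).trans (card_univ (α := ι)).le
  have hsum : ((∑ j ∈ univ.erase i, |v j| : ℤ) : ℝ) ≤ (univ.erase i).card • c := by
    push_cast
    exact sum_le_card_nsmul _ _ _ fun j hj => hoff j (ne_of_mem_erase hj).symm
  rw [nsmul_eq_mul] at hsum
  exact_mod_cast hsum.trans_lt ((mul_le_mul_of_nonneg_right hcard hc).trans_lt hdiag)

theorem sum_abs_sub_sign_smul_lt {ι : Type*} [Fintype ι] [DecidableEq ι]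
    (y v : ι → ℤ) (i : ι) (hdom : ∑ j ∈ univ.erase i, |v j| < v i) (hvy : v i ≤ |y i|) :
    ∑ j, |(y - (y i).sign • v) j| < ∑ j, |y j| := by
  have hyi : y i ≠ 0 := by
    rintro h
    have := sum_nonneg fun j (_ : j ∈ univ.erase i) => abs_nonneg (v j)
    simp only [h, abs_zero] at hvy
    omega
  have hsign : |(y i).sign| = 1 := Int.abs_sign_of_ne_zero hyi
  have hdiag : |y i - (y i).sign * v i| = |y i| - v i := by
    rw [show y i - (y i).sign * v i = (y i).sign * (|y i| - v i) by rw [mul_sub, Int.sign_mul_abs],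
      abs_mul, hsign, one_mul, abs_of_nonneg (sub_nonneg.mpr hvy)]
  have hoff : ∀ j ∈ univ.erase i, |y j - (y i).sign * v j| ≤ |y j| + |v j| := fun j _ =>
    (abs_sub _ _).trans_eq (by rw [abs_mul, hsign, one_mul])
  simp only [Pi.sub_apply, Pi.smul_apply, smul_eq_mul]
  rw [← add_sum_erase _ _ (mem_univ i), ← add_sum_erase _ _ (mem_univ i), hdiag]
  have := sum_le_sum hoff
  rw [sum_add_distrib] at this
  linarith

theorem stmt2_general (n : ℕ) (k : ℝ) (hk : 0 < k)
    (x : Fin n → (Fin n → ℤ))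
    (hxdiag : ∀ i : Fin n, k / (2 * n) < (x i i : ℝ) ∧ (x i i : ℝ) ≤ k / n)
    (hxoff : ∀ i j : Fin n, i ≠ j → |(x i j : ℝ)| ≤ k / (2 * n ^ 2))
    (N : AddSubgroup (Fin n → ℤ)) (hN : N = AddSubgroup.closure (Set.range x)) :
    ∀ y : Fin n → ℤ, ∃ z : Fin n → ℤ, y - z ∈ N ∧ ((∑ i, |z i| : ℤ) : ℝ) ≤ k := by
  refine N.exists_sub_mem_sum_abs_le k fun y hy => ?_
  obtain ⟨i, hi⟩ := Fintype.exists_div_card_lt_of_lt_sum hk.le (fun i => ((|y i| : ℤ) : ℝ))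
    (by exact_mod_cast hy)
  rw [Fintype.card_fin] at hi
  have hn : (0 : ℝ) < n := by exact_mod_cast i.pos
  have hdom : ∑ j ∈ univ.erase i, |x i j| < x i i := by
    refine sum_erase_abs_lt_of_abs_le (x i) i (by positivity) (hxoff i) ?_
    calc (Fintype.card (Fin n) : ℝ) * (k / (2 * n ^ 2)) = k / (2 * n) := by
          rw [Fintype.card_fin]; field_simp
      _ < x i i := (hxdiag i).1
  refine ⟨(y i).sign • x i, N.zsmul_mem (hN ▸ AddSubgroup.subset_closure ⟨i, rfl⟩) _, ?_⟩
  exact sum_abs_sub_sign_smul_lt y (x i) i hdom (by exact_mod_cast (hxdiag i).2.trans hi.le)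

/-- Let `n ≥ 1` and `k > 0`. If `x₁,…,xₙ` are vectors in `ℤⁿ` with
`k/(2n) < x_{ii} ≤ k/n` and `|x_{ij}| ≤ k/(2n²)` for `i ≠ j`, and `N` is the subgroup they
generate, then every coset of `N` in `ℤⁿ` contains a vector of ℓ¹-norm at most `k`,
i.e. `diam(ℤⁿ/N) ≤ k` in the ℓ¹ word metric. -/
theorem stmt2 (n : ℕ) (hn : 1 ≤ n) (k : ℝ) (hk : 0 < k)
    (x : Fin n → (Fin n → ℤ))
    (hxdiag : ∀ i : Fin n, k / (2 * n) < (x i i : ℝ) ∧ (x i i : ℝ) ≤ k / n)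
    (hxoff : ∀ i j : Fin n, i ≠ j → |(x i j : ℝ)| ≤ k / (2 * n ^ 2))
    (N : AddSubgroup (Fin n → ℤ)) (hN : N = AddSubgroup.closure (Set.range x)) :
    ∀ y : Fin n → ℤ, ∃ z : Fin n → ℤ, y - z ∈ N ∧ ((∑ i, |z i| : ℤ) : ℝ) ≤ k :=
  stmt2_general n k hk x hxdiag hxoff N hN
end

section
/- For every n ≥ 1, every finite-index subgroup N of ℤⁿ, every minimal generating tuple (x₁,…,xₙ) of N, and all real numbers a₁,…,aₙ, one has ‖a₁x₁ + … + aₙxₙ‖ ≥ (1/Dₙ)·maxᵢ ‖aᵢxᵢ‖. -/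
/-- The constants `Dₙ`, defined recursively by `D₁ = 1` and
`Dₙ = D_{n−1}² · (4·n²·D_{n−1}³)ⁿ`. -/
noncomputable def Dc : ℕ → ℝ
  | 0 => 1
  | 1 => 1
  | (n + 2) => (Dc (n + 1)) ^ 2 * (4 * ((n + 2 : ℕ) : ℝ) ^ 2 * (Dc (n + 1)) ^ 3) ^ (n + 2)

/-- The canonical embedding of `ℤⁿ` into Euclidean space `ℝⁿ`. -/
def toR {n : ℕ} (x : Fin n → ℤ) : EuclideanSpace ℝ (Fin n) := WithLp.toLp 2 (fun i => (x i : ℝ))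

/-- `N ∩ Span_ℝ S = ⟨S⟩`: the elements of `N` lying in the real span of `S`
are exactly the subgroup generated by `S`. -/
def SpanCond {n : ℕ} (N : AddSubgroup (Fin n → ℤ)) (S : Set (Fin n → ℤ)) : Prop :=
  {y : Fin n → ℤ | y ∈ N ∧ toR y ∈ Submodule.span ℝ (toR '' S)} =
    (AddSubgroup.closure S : Set (Fin n → ℤ))

/-- `(x₁,…,xₙ)` is a minimal generating tuple of `N ≤ ℤⁿ`: each `xᵢ` lies in `N` outside the
subgroup generated by the previous ones, satisfies `N ∩ Span_ℝ{x₁,…,xᵢ} = ⟨x₁,…,xᵢ⟩`, and has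
minimal Euclidean norm among all such candidates. -/
def IsMinGenTuple {n : ℕ} (N : AddSubgroup (Fin n → ℤ)) (x : Fin n → (Fin n → ℤ)) : Prop :=
  ∀ i : Fin n,
    x i ∈ N ∧
    x i ∉ AddSubgroup.closure (x '' {j | j < i}) ∧
    SpanCond N (x '' {j | j ≤ i}) ∧
    ∀ y ∈ N, y ∉ AddSubgroup.closure (x '' {j | j < i}) →
      SpanCond N (insert y (x '' {j | j < i})) → ‖toR (x i)‖ ≤ ‖toR y‖

/-!
Write `eᵢ = toR (x i)` and let `eᵢ*` be the Gram–Schmidt vectors of `e₀, …, eₙ₋₁`. By minimality,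
every combination `y = ∑ cₗ xₗ` with `cᵢ ≠ 0` for some `i ≥ s` and `(cₗ)_{l ≥ s}` primitive is an
admissible candidate at step `s`, so `‖xₛ‖ ≤ ‖y‖`. A simultaneous Dirichlet approximation of
`eᵢ - eᵢ*` by `e₀, …, eᵢ₋₁` produces a short combination with `cᵢ ≠ 0`; dividing out the gcd of its
tail and rounding its head, one index at a time, makes it admissible at step `i` at a controlled
cost. This gives `Dᵢ ‖eᵢ‖ ≤ Dᵢ₊₁ ‖eᵢ*‖`, hence `∏ ‖eᵢ‖ ≤ Dₙ ∏ ‖eᵢ*‖`. The right-hand product is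
`|det e|`, which does not depend on the order of the vectors: putting `eᵢ` last shows that `‖eᵢ‖` is
at most `Dₙ` times the distance from `eᵢ` to the span of the others, and that distance times `|aᵢ|`
is at most `‖∑ aⱼ eⱼ‖`.
-/

open Finset Submodule InnerProductSpace

lemma linearIndependent_of_notMem_span_Iio {K V ι : Type*} [DivisionRing K] [AddCommGroup V]
    [Module K V] [LinearOrder ι] [Fintype ι] {v : ι → V}
    (h : ∀ i, v i ∉ span K (v '' Set.Iio i)) : LinearIndependent K v := by
  classical
  rw [Fintype.linearIndependent_iff]
  intro g hg
  by_contra! hne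
  obtain ⟨i, hi, hmax⟩ := (univ.filter (g · ≠ 0)).exists_max_image id
    (let ⟨j, hj⟩ := hne; ⟨j, by simpa using hj⟩)
  simp only [mem_filter, mem_univ, true_and, id] at hi hmax
  apply h i
  have hvi : v i = -(g i)⁻¹ • ∑ l ∈ univ.erase i, g l • v l := by
    rw [← add_sum_erase _ _ (mem_univ i)] at hg
    rw [neg_smul, ← smul_neg, ← eq_neg_of_add_eq_zero_left hg, smul_smul, inv_mul_cancel₀ hi,
      one_smul]
  rw [hvi]
  refine smul_mem _ _ (sum_mem fun l hl => ?_)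
  by_cases hgl : g l = 0
  · simp [hgl]
  · exact smul_mem _ _ (subset_span ⟨l, lt_of_le_of_ne (hmax l hgl) (ne_of_mem_erase hl), rfl⟩)

lemma exists_eq_sum_smul_of_mem_span_image {R M ι : Type*} [Semiring R] [AddCommMonoid M]
    [Module R M] [Fintype ι] {v : ι → M} {s : Set ι} {y : M} (h : y ∈ span R (v '' s)) :
    ∃ c : ι → R, (∀ l ∉ s, c l = 0) ∧ y = ∑ l, c l • v l := by
  obtain ⟨c, hc, rfl⟩ := (Finsupp.mem_span_image_iff_linearCombination R).mp h
  exact ⟨c, fun l hl => (Finsupp.mem_supported' R c).mp hc l hl, by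
    rw [Finsupp.linearCombination_apply,
      Finsupp.sum_fintype c (fun l a => a • v l) fun _ => zero_smul R _]⟩

lemma exists_eq_sum_zsmul_of_mem_closure {M ι : Type*} [AddCommGroup M] [Fintype ι] {x : ι → M}
    {s : Set ι} {y : M} (h : y ∈ AddSubgroup.closure (x '' s)) :
    ∃ c : ι → ℤ, (∀ l ∉ s, c l = 0) ∧ y = ∑ l, c l • x l :=
  exists_eq_sum_smul_of_mem_span_image (by rwa [← span_int_eq_addSubgroupClosure] at h)

lemma exists_int_eq_of_gcd_eq_one {ι : Type*} {s : Finset ι} {c : ι → ℤ} (hc : s.gcd c = 1)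
    {a : ι → ℤ} {β : ℝ} (h : ∀ l ∈ s, (a l : ℝ) = β * c l) : ∃ q : ℤ, β = q := by
  obtain ⟨u, hu⟩ := s.gcd_eq_sum_mul c
  refine ⟨∑ l ∈ s, a l * u l, ?_⟩
  have hu' : (1 : ℝ) = ∑ l ∈ s, (c l : ℝ) * u l := by exact_mod_cast hc ▸ hu
  calc β = β * ∑ l ∈ s, (c l : ℝ) * u l := by rw [← hu', mul_one]
    _ = ∑ l ∈ s, β * c l * u l := by simp only [mul_sum, mul_assoc]
    _ = _ := by push_cast; exact sum_congr rfl fun l hl => by rw [h l hl]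

lemma exists_gcd_eq_one_and_norm_sum_le {ι V : Type*} [Fintype ι] [DecidableEq ι]
    [SeminormedAddCommGroup V] [NormedSpace ℝ V] (e : ι → V) (T : Finset ι) {c : ι → ℤ} {i : ι}
    (hi : i ∈ T) (hci : c i ≠ 0) :
    ∃ c' : ι → ℤ, c' i ≠ 0 ∧ T.gcd c' = 1 ∧
      ‖∑ l, (c' l : ℝ) • e l‖ ≤ ‖∑ l, (c l : ℝ) • e l‖ + (∑ l ∈ Tᶜ, ‖e l‖) / 2 := by
  set δ := T.gcd c
  have hδ : δ ∣ c i := gcd_dvd hi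
  have hδ0 : δ ≠ 0 := fun h => hci (zero_dvd_iff.mp (h ▸ hδ))
  have hδ1 : (1 : ℝ) ≤ δ := by
    have : 0 ≤ δ := Finset.Int.finsetGcd_nonneg
    exact_mod_cast (show 1 ≤ δ by omega)
  set c' : ι → ℤ := fun l => if l ∈ T then c l / δ else round ((c l : ℝ) / δ)
  have hexact : ∀ l ∈ T, (c' l : ℝ) = c l / δ := fun l hl => by
    simp only [c', if_pos hl]; rw [Int.cast_div (gcd_dvd hl) (by exact_mod_cast hδ0)]
  have hround : ∀ l, ‖((c' l : ℝ) - c l / δ) • e l‖ ≤ if l ∈ T then 0 else ‖e l‖ / 2 := by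
    intro l
    split_ifs with hl
    · rw [hexact l hl, sub_self, zero_smul, norm_zero]
    · rw [norm_smul, Real.norm_eq_abs, mul_comm, div_eq_mul_one_div]
      refine mul_le_mul_of_nonneg_left ?_ (norm_nonneg (e l))
      simpa [c', hl, abs_sub_comm, div_eq_mul_inv] using abs_sub_round ((c l : ℝ) / δ)
  refine ⟨c', fun h => ?_, (gcd_congr rfl fun l hl => if_pos hl).trans (gcd_div_eq_one hi hci), ?_⟩
  · have := hexact i hi
    rw [h, Int.cast_zero, eq_comm, div_eq_zero_iff] at this
    exact this.elim (by exact_mod_cast hci) (by exact_mod_cast hδ0)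
  calc ‖∑ l, (c' l : ℝ) • e l‖
      = ‖(δ : ℝ)⁻¹ • ∑ l, (c l : ℝ) • e l + ∑ l, ((c' l : ℝ) - c l / δ) • e l‖ := by
        rw [smul_sum, ← sum_add_distrib]
        simp only [smul_smul, ← add_smul, div_eq_inv_mul, add_sub_cancel]
    _ ≤ ‖∑ l, (c l : ℝ) • e l‖ + (∑ l ∈ Tᶜ, ‖e l‖) / 2 := by
        refine (norm_add_le _ _).trans (add_le_add ?_ ?_)
        · rw [norm_smul, norm_inv, Real.norm_of_nonneg (by linarith)]
          exact mul_le_of_le_one_left (norm_nonneg _) (inv_le_one_of_one_le₀ hδ1)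
        · refine (norm_sum_le _ _).trans ((sum_le_sum fun l _ => hround l).trans ?_)
          rw [← sum_add_sum_compl T, sum_div]
          simp +contextual [sum_ite_of_false, mem_compl]

lemma exists_nat_abs_mul_sub_round_le_of_finset {ι : Type*} (s : Finset ι) (γ : ι → ℝ) {m : ℕ}
    (hm : 0 < m) :
    ∃ k : ℕ, 0 < k ∧ k ≤ m ^ #s ∧ ∀ l ∈ s, |k * γ l - round (k * γ l)| ≤ 1 / m := by
  classical
  -- pigeonhole on the boxes of side `1 / m` containing the fractional parts of `k • γ`
  let box : ℕ → s → ℤ := fun k l => ⌊Int.fract (k * γ l) * m⌋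
  have hbox : ∀ k ∈ range (m ^ #s + 1),
      box k ∈ Fintype.piFinset fun _ : s => Ico (0 : ℤ) m := by
    intro k _
    simp only [Fintype.mem_piFinset, mem_Ico, box]
    exact fun l => ⟨Int.floor_nonneg.mpr (by positivity), Int.floor_lt.mpr
      (by simpa using mul_lt_of_lt_one_left (by positivity) (Int.fract_lt_one _))⟩
  obtain ⟨p, hp, q, hq, hpq, heq⟩ :=
    exists_ne_map_eq_of_card_lt_of_maps_to (by simp) hbox
  wlog hlt : p < q generalizing p q
  · exact this q hq p hp hpq.symm heq.symm (hpq.lt_or_gt.resolve_left hlt)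
  refine ⟨q - p, by omega, by simp at hq; omega, fun l hl => ?_⟩
  have hclose := Int.abs_sub_lt_one_of_floor_eq_floor (congr_fun heq ⟨l, hl⟩)
  have hm' : (0 : ℝ) < m := by exact_mod_cast hm
  calc |((q - p : ℕ) : ℝ) * γ l - round (((q - p : ℕ) : ℝ) * γ l)|
      ≤ |((q - p : ℕ) : ℝ) * γ l - (⌊q * γ l⌋ - ⌊p * γ l⌋ : ℤ)| := round_le _ _
    _ = |Int.fract (p * γ l) * m - Int.fract (q * γ l) * m| / m := by
        rw [← sub_mul, abs_mul, abs_of_pos hm', mul_div_cancel_right₀ _ hm'.ne', abs_sub_comm,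
          Int.fract, Int.fract, Nat.cast_sub hlt.le]
        push_cast; ring_nf
    _ ≤ 1 / m := by gcongr

section GramSchmidt

variable {E : Type*} [NormedAddCommGroup E] [InnerProductSpace ℝ E]
  {ι : Type*} [LinearOrder ι] [LocallyFiniteOrderBot ι] [WellFoundedLT ι]

lemma sub_gramSchmidt_mem_span (f : ι → E) (t : ι) :
    f t - gramSchmidt ℝ f t ∈ span ℝ (f '' Set.Iio t) := by
  rw [← span_gramSchmidt_Iio ℝ f t, gramSchmidt_def ℝ f t, sub_sub_cancel]
  refine Submodule.sum_mem _ fun j hj => ?_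
  rw [starProjection_singleton]
  exact Submodule.smul_mem _ _ (subset_span ⟨j, Finset.mem_Iio.mp hj, rfl⟩)

lemma inner_gramSchmidt_eq_zero_of_mem_span (f : ι → E) (t : ι) {w : E}
    (hw : w ∈ span ℝ (f '' Set.Iio t)) : ⟪gramSchmidt ℝ f t, w⟫_ℝ = 0 := by
  suffices span ℝ (f '' Set.Iio t) ≤ (ℝ ∙ gramSchmidt ℝ f t)ᗮ from
    inner_eq_zero_symm.mp ((mem_orthogonal_singleton_iff_inner_left).mp (this hw))
  rw [span_le]
  rintro _ ⟨l, hl, rfl⟩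
  exact mem_orthogonal_singleton_iff_inner_right.mpr (gramSchmidt_inv_triangular ℝ f hl)

lemma norm_smul_gramSchmidt_le (f : ι → E) (t : ι) (c : ℝ) {w : E}
    (hw : w ∈ span ℝ (f '' Set.Iio t)) : ‖c • gramSchmidt ℝ f t‖ ≤ ‖c • f t + w‖ := by
  set v := c • (f t - gramSchmidt ℝ f t) + w
  have hv : v ∈ span ℝ (f '' Set.Iio t) :=
    add_mem (smul_mem _ _ (sub_gramSchmidt_mem_span f t)) hw
  have hsplit : c • f t + w = c • gramSchmidt ℝ f t + v := by
    simp only [v, smul_sub]; abel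
  have horth : ⟪c • gramSchmidt ℝ f t, v⟫_ℝ = 0 := by
    rw [real_inner_smul_left, inner_gramSchmidt_eq_zero_of_mem_span f t hv, mul_zero]
  rw [hsplit, ← sq_le_sq₀ (norm_nonneg _) (norm_nonneg _), norm_add_sq_real, horth]
  nlinarith [sq_nonneg ‖v‖]

lemma norm_gramSchmidt_le (f : ι → E) (t : ι) : ‖gramSchmidt ℝ f t‖ ≤ ‖f t‖ := by
  simpa using norm_smul_gramSchmidt_le f t 1 (zero_mem _)

lemma abs_inner_gramSchmidtOrthonormalBasis [Fintype ι] [FiniteDimensional ℝ E]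
    (h : Module.finrank ℝ E = Fintype.card ι) (f : ι → E) (t : ι) :
    |⟪gramSchmidtOrthonormalBasis h f t, f t⟫_ℝ| = ‖gramSchmidt ℝ f t‖ := by
  by_cases ht : gramSchmidtNormed ℝ f t = 0
  · rw [inner_gramSchmidtOrthonormalBasis_eq_zero h ht, abs_zero, eq_comm]
    simpa [gramSchmidtNormed] using ht
  · have hgs : ⟪gramSchmidt ℝ f t, f t⟫_ℝ = ‖gramSchmidt ℝ f t‖ ^ 2 := by
      have := inner_gramSchmidt_eq_zero_of_mem_span f t (sub_gramSchmidt_mem_span f t)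
      rw [inner_sub_right, sub_eq_zero, real_inner_self_eq_norm_sq] at this
      exact this
    rw [gramSchmidtOrthonormalBasis_apply h ht, gramSchmidtNormed, real_inner_smul_left, hgs]
    simp [abs_of_nonneg, sq, ← mul_assoc]

lemma abs_det_eq_prod_norm_gramSchmidt [Fintype ι] [FiniteDimensional ℝ E]
    (b : OrthonormalBasis ι ℝ E) (f : ι → E) :
    |b.toBasis.det f| = ∏ t, ‖gramSchmidt ℝ f t‖ := by
  have h : Module.finrank ℝ E = Fintype.card ι := Module.finrank_eq_card_basis b.toBasis
  set g := gramSchmidtOrthonormalBasis h f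
  have hdet : b.toBasis.det f = b.toBasis.det g * g.toBasis.det f := by
    conv_lhs => rw [AlternatingMap.eq_smul_basis_det g.toBasis b.toBasis.det]
    simp
  rw [hdet, abs_mul, gramSchmidtOrthonormalBasis_det, abs_prod]
  rcases b.det_to_matrix_orthonormalBasis_real g with h1 | h1 <;>
    simp [h1, abs_inner_gramSchmidtOrthonormalBasis]

lemma prod_norm_gramSchmidt_comp_perm [Fintype ι] [FiniteDimensional ℝ E]
    (h : Module.finrank ℝ E = Fintype.card ι) (f : ι → E) (σ : Equiv.Perm ι) :
    ∏ t, ‖gramSchmidt ℝ (f ∘ σ) t‖ = ∏ t, ‖gramSchmidt ℝ f t‖ := by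
  let b := (stdOrthonormalBasis ℝ E).reindex (Fintype.equivFinOfCardEq h.symm).symm
  rw [← abs_det_eq_prod_norm_gramSchmidt b, ← abs_det_eq_prod_norm_gramSchmidt b,
    AlternatingMap.map_perm, Units.smul_def, abs_zsmul, Int.abs_eq_natAbs, Int.units_natAbs,
    Nat.cast_one, one_smul]

lemma norm_smul_le_mul_norm_sum {m : ℕ} [FiniteDimensional ℝ E]
    (h : Module.finrank ℝ E = m + 1) {f : Fin (m + 1) → E} (hf : ∀ j, f j ≠ 0) {C : ℝ}
    (hC : ∏ t, ‖f t‖ ≤ C * ∏ t, ‖gramSchmidt ℝ f t‖) (a : Fin (m + 1) → ℝ) (i : Fin (m + 1)) :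
    ‖a i • f i‖ ≤ C * ‖∑ j, a j • f j‖ := by
  -- Reorder so that `f i` comes last; its Gram–Schmidt vector is then orthogonal to all others.
  set σ := Equiv.swap i (Fin.last m)
  set g := f ∘ σ
  have hσ : σ (Fin.last m) = i := Equiv.swap_apply_right i _
  set d := ‖gramSchmidt ℝ g (Fin.last m)‖
  set P := ∏ t : Fin m, ‖g t.castSucc‖
  have hP : 0 < P := prod_pos fun t _ => norm_pos_iff.mpr (hf _)
  have hC0 : 0 ≤ C :=
    (pos_of_mul_pos_left ((prod_pos fun t _ => norm_pos_iff.mpr (hf t)).trans_le hC)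
      (prod_nonneg fun _ _ => norm_nonneg _)).le
  have hdist : ‖f i‖ ≤ C * d := by
    refine le_of_mul_le_mul_left ?_ hP
    calc P * ‖f i‖ = ∏ t, ‖f t‖ := by
          rw [← Equiv.prod_comp σ, Fin.prod_univ_castSucc]; simp [g, P, hσ]
      _ ≤ C * ∏ t, ‖gramSchmidt ℝ g t‖ := by
          rwa [prod_norm_gramSchmidt_comp_perm (by simp [h]) f σ]
      _ ≤ C * (P * d) := by
          rw [Fin.prod_univ_castSucc]
          exact mul_le_mul_of_nonneg_left (mul_le_mul_of_nonneg_right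
            (prod_le_prod (fun _ _ => norm_nonneg _) fun t _ => norm_gramSchmidt_le g _)
            (norm_nonneg _)) hC0
      _ = P * (C * d) := by ring
  have hlow : |a i| * d ≤ ‖∑ j, a j • f j‖ := by
    have hw : ∑ t : Fin m, a (σ t.castSucc) • g t.castSucc ∈ span ℝ (g '' Set.Iio (Fin.last m)) :=
      sum_mem fun t _ => smul_mem _ _ (subset_span ⟨_, Fin.castSucc_lt_last t, rfl⟩)
    calc |a i| * d = ‖a i • gramSchmidt ℝ g (Fin.last m)‖ := by rw [norm_smul, Real.norm_eq_abs]
      _ ≤ ‖a i • g (Fin.last m) + ∑ t : Fin m, a (σ t.castSucc) • g t.castSucc‖ :=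
          norm_smul_gramSchmidt_le g _ _ hw
      _ = ‖∑ j, a j • f j‖ := by
          rw [← Equiv.sum_comp σ, Fin.sum_univ_castSucc, add_comm]; simp [g, hσ]
  calc ‖a i • f i‖ = |a i| * ‖f i‖ := by rw [norm_smul, Real.norm_eq_abs]
    _ ≤ |a i| * (C * d) := mul_le_mul_of_nonneg_left hdist (abs_nonneg _)
    _ = C * (|a i| * d) := by ring
    _ ≤ C * ‖∑ j, a j • f j‖ := mul_le_mul_of_nonneg_left hlow hC0

lemma exists_int_coeff_ne_zero_norm_sum_le [Fintype ι] (f : ι → E) (i : ι) {m : ℕ} (hm : 0 < m) :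
    ∃ c : ι → ℤ, c i ≠ 0 ∧ ‖∑ l, (c l : ℝ) • f l‖ ≤
      m ^ #(Iio i) * ‖gramSchmidt ℝ f i‖ + (∑ l ∈ Iio i, ‖f l‖) / m := by
  -- `k • f i` minus the integer combination of the `f l`, `l < i`, closest to
  -- `k • (f i - gramSchmidt ℝ f i)`, with `k` from a simultaneous Dirichlet approximation
  obtain ⟨γ, hγ0, hγ⟩ := exists_eq_sum_smul_of_mem_span_image (sub_gramSchmidt_mem_span f i)
  obtain ⟨k, hk0, hkm, hk⟩ := exists_nat_abs_mul_sub_round_le_of_finset (Iio i) γ hm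
  have hγi : γ i = 0 := hγ0 i (lt_irrefl i)
  refine ⟨fun l => (if l = i then (k : ℤ) else 0) - round (k * γ l), by simp [hγi]; omega, ?_⟩
  have hsum : ∑ l, (((if l = i then (k : ℤ) else 0) - round (k * γ l) : ℤ) : ℝ) • f l
      = (k : ℝ) • gramSchmidt ℝ f i + ∑ l, ((k : ℝ) * γ l - round (k * γ l)) • f l := by
    push_cast
    simp only [sub_smul, sum_sub_distrib, ite_smul, zero_smul, sum_ite_eq', mem_univ, if_true,
      mul_smul, ← smul_sum, ← hγ, smul_sub]
    abel
  have hterm : ∀ l, ‖((k : ℝ) * γ l - round (k * γ l)) • f l‖ ≤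
      if l ∈ Iio i then ‖f l‖ / m else 0 := by
    intro l
    split_ifs with hl
    · rw [norm_smul, Real.norm_eq_abs, mul_comm, div_eq_mul_one_div]
      exact mul_le_mul_of_nonneg_left (hk l hl) (norm_nonneg _)
    · simp [hγ0 l (by simpa using hl)]
  rw [hsum]
  refine (norm_add_le _ _).trans (add_le_add ?_ ?_)
  · rw [norm_smul, Real.norm_natCast]
    exact mul_le_mul_of_nonneg_right (by exact_mod_cast hkm) (norm_nonneg _)
  · refine (norm_sum_le _ _).trans ((sum_le_sum fun l _ => hterm l).trans ?_)
    rw [sum_ite_mem, univ_inter, sum_div]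

end GramSchmidt

lemma Dc_succ {p : ℕ} (hp : 1 ≤ p) :
    Dc (p + 1) = Dc p ^ 2 * (4 * ((p : ℝ) + 1) ^ 2 * Dc p ^ 3) ^ (p + 1) := by
  obtain ⟨q, rfl⟩ := Nat.exists_eq_add_of_le' hp
  rw [Dc]
  push_cast
  ring

lemma one_le_Dc (p : ℕ) : 1 ≤ Dc p := by
  induction p with
  | zero => exact le_of_eq rfl
  | succ p ih =>
    rcases Nat.eq_zero_or_pos p with rfl | hp
    · exact le_of_eq rfl
    rw [Dc_succ hp]
    have hc : (1 : ℝ) ≤ 4 * ((p : ℝ) + 1) ^ 2 := by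
      nlinarith [one_le_pow₀ (n := 2) (le_add_of_nonneg_left (Nat.cast_nonneg p) : (1 : ℝ) ≤ p + 1)]
    exact one_le_mul_of_one_le_of_one_le (one_le_pow₀ ih)
      (one_le_pow₀ (one_le_mul_of_one_le_of_one_le hc (one_le_pow₀ ih)))

lemma Dc_pos (p : ℕ) : 0 < Dc p := zero_lt_one.trans_le (one_le_Dc p)

lemma pow_le_Dc {p : ℕ} (hp : 2 ≤ p) : ((p : ℝ) + 1) ^ (2 * p) ≤ Dc p := by
  obtain ⟨q, rfl⟩ : ∃ q, p = q + 1 := ⟨p - 1, by omega⟩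
  have hA : 1 ≤ Dc q := one_le_Dc q
  rw [Dc_succ (by omega)]
  push_cast
  calc ((q : ℝ) + 1 + 1) ^ (2 * (q + 1)) ≤ (2 * ((q : ℝ) + 1)) ^ (2 * (q + 1)) := by
        gcongr; linarith
    _ = (4 * ((q : ℝ) + 1) ^ 2) ^ (q + 1) := by rw [pow_mul, mul_pow]; norm_num
    _ ≤ Dc q ^ 2 * (4 * ((q : ℝ) + 1) ^ 2 * Dc q ^ 3) ^ (q + 1) := by
        refine (pow_le_pow_left₀ (by positivity) ?_ _).trans
          (le_mul_of_one_le_left (by positivity) (one_le_pow₀ hA))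
        exact le_mul_of_one_le_right (by positivity) (one_le_pow₀ hA)

lemma mul_Dc_le_Dc_succ {p : ℕ} (hp : 1 ≤ p) :
    4 / 3 * ((p : ℝ) + 1) ^ p * (4 * ((p : ℝ) + 1) ^ (p + 1)) ^ p * Dc p ≤ Dc (p + 1) := by
  set c : ℝ := p + 1
  set A := Dc p
  have hc : 1 ≤ c := by simp [c]
  have hA : 1 ≤ A := one_le_Dc p
  have hpow : c ^ (p * p + 2 * p) ≤ c ^ (2 * p + 2) * A ^ (3 * p + 4) := by
    rcases Nat.lt_or_ge p 2 with hp2 | hp2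
    · obtain rfl : p = 1 := by omega
      exact (pow_le_pow_right₀ hc (by norm_num)).trans
        (le_mul_of_one_le_right (by positivity) (one_le_pow₀ hA))
    · calc c ^ (p * p + 2 * p) ≤ c ^ (2 * p * (3 * p + 4)) := pow_le_pow_right₀ hc (by nlinarith)
        _ = (c ^ (2 * p)) ^ (3 * p + 4) := pow_mul _ _ _
        _ ≤ A ^ (3 * p + 4) := pow_le_pow_left₀ (by positivity) (pow_le_Dc hp2) _
        _ ≤ c ^ (2 * p + 2) * A ^ (3 * p + 4) :=
            le_mul_of_one_le_left (by positivity) (one_le_pow₀ hc)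
  rw [Dc_succ hp]
  calc 4 / 3 * c ^ p * (4 * c ^ (p + 1)) ^ p * A = 4 / 3 * 4 ^ p * c ^ (p * p + 2 * p) * A := by
        rw [mul_pow, ← pow_mul, show p * p + 2 * p = p + (p + 1) * p by ring, pow_add]; ring
    _ ≤ 4 ^ (p + 1) * (c ^ (2 * p + 2) * A ^ (3 * p + 4)) * A := by
        gcongr
        rw [pow_succ]; linarith [pow_pos (by norm_num : (0:ℝ) < 4) p]
    _ = A ^ 2 * (4 * c ^ 2 * A ^ 3) ^ (p + 1) := by
        rw [mul_pow, mul_pow, ← pow_mul, ← pow_mul]; ring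

section ToR

variable {n : ℕ}

lemma toR_injective : Function.Injective (toR (n := n)) := fun a b h =>
  funext fun i => by simpa [toR] using congrArg (· i) h

lemma toR_sum_zsmul {ι : Type*} [Fintype ι] (c : ι → ℤ) (x : ι → Fin n → ℤ) :
    toR (∑ l, c l • x l) = ∑ l, (c l : ℝ) • toR (x l) := by
  ext; simp [toR]

def toRAddHom (n : ℕ) : (Fin n → ℤ) →+ EuclideanSpace ℝ (Fin n) :=
  AddMonoidHom.mk' toR fun a b => by ext; simp [toR]

lemma toR_zero : toR (0 : Fin n → ℤ) = 0 := (toRAddHom n).map_zero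

lemma spanCond_empty (N : AddSubgroup (Fin n → ℤ)) : SpanCond N ∅ := by
  ext y
  simp only [Set.image_empty, span_empty, AddSubgroup.closure_empty, Set.mem_ofPred_eq, mem_bot,
    SetLike.mem_coe, AddSubgroup.mem_bot]
  exact ⟨fun h => toR_injective (h.2.trans toR_zero.symm),
    by rintro rfl; exact ⟨N.zero_mem, toR_zero⟩⟩

lemma closure_subset_setOf_mem_span {N : AddSubgroup (Fin n → ℤ)} {S : Set (Fin n → ℤ)}
    (hS : S ⊆ N) :
    (AddSubgroup.closure S : Set (Fin n → ℤ)) ⊆ {y | y ∈ N ∧ toR y ∈ span ℝ (toR '' S)} :=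
  have : AddSubgroup.closure S ≤ N ⊓ (span ℝ (toR '' S)).toAddSubgroup.comap (toRAddHom n) :=
    (AddSubgroup.closure_le _).mpr fun y hy => ⟨hS hy, subset_span ⟨y, hy, rfl⟩⟩
  fun _ hy => this hy

end ToR

namespace IsMinGenTuple

variable {n : ℕ} {N : AddSubgroup (Fin n → ℤ)} {x : Fin n → Fin n → ℤ}

lemma spanCond_Iio (hx : IsMinGenTuple N x) (i : Fin n) : SpanCond N (x '' Set.Iio i) := by
  rcases i with ⟨_ | j, hj⟩
  · convert spanCond_empty N
    simp [Set.Iio, Fin.lt_def]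
  · have : Set.Iio (⟨j + 1, hj⟩ : Fin n) = Set.Iic ⟨j, by omega⟩ := by
      ext l; simp [Fin.lt_def, Fin.le_def]
    rw [this]
    exact (hx _).2.2.1

lemma toR_notMem_span (hx : IsMinGenTuple N x) (i : Fin n) :
    toR (x i) ∉ span ℝ ((toR ∘ x) '' Set.Iio i) := fun h =>
  (hx i).2.1 <|
    (Set.ext_iff.mp (hx.spanCond_Iio i) (x i)).mp ⟨(hx i).1, by rwa [Set.image_comp] at h⟩

lemma linearIndependent (hx : IsMinGenTuple N x) : LinearIndependent ℝ (toR ∘ x) :=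
  linearIndependent_of_notMem_span_Iio hx.toR_notMem_span

lemma sum_zsmul_injective (hx : IsMinGenTuple N x) :
    Function.Injective fun c : Fin n → ℤ => ∑ l, c l • x l := fun c d h => by
  have := congrArg toR h
  simp only [toR_sum_zsmul] at this
  funext l
  exact_mod_cast Fintype.linearIndependent_iffₛ.mp hx.linearIndependent _ _ this l

lemma sum_zsmul_mem (hx : IsMinGenTuple N x) (c : Fin n → ℤ) : ∑ l, c l • x l ∈ N :=
  sum_mem fun l _ => N.zsmul_mem (hx l).1 _

lemma exists_eq_sum_zsmul (hx : IsMinGenTuple N x) {w : Fin n → ℤ} (hw : w ∈ N) :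
    ∃ c : Fin n → ℤ, w = ∑ l, c l • x l := by
  rcases n with _ | m
  · exact ⟨0, Subsingleton.elim _ _⟩
  have hspan : span ℝ (Set.range (toR ∘ x)) = ⊤ :=
    hx.linearIndependent.span_eq_top_of_card_eq_finrank (by simp)
  have hw' : w ∈ AddSubgroup.closure (x '' Set.Iic ⊤) := by
    refine (Set.ext_iff.mp (hx ⊤).2.2.1 w).mp ⟨hw, ?_⟩
    rw [show {j | j ≤ ⊤} = Set.univ from Set.Iic_top, Set.image_univ, ← Set.range_comp, hspan]
    exact mem_top
  obtain ⟨c, -, hc⟩ := exists_eq_sum_zsmul_of_mem_closure hw'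
  exact ⟨c, hc⟩

lemma sum_zsmul_notMem_closure (hx : IsMinGenTuple N x) {s i : Fin n} (hsi : s ≤ i)
    {c : Fin n → ℤ} (hci : c i ≠ 0) : ∑ l, c l • x l ∉ AddSubgroup.closure (x '' Set.Iio s) :=
  fun h => by
    obtain ⟨d, hd, hcd⟩ := exists_eq_sum_zsmul_of_mem_closure h
    exact hci (hx.sum_zsmul_injective hcd ▸ hd i (not_lt.mpr hsi))

lemma spanCond_insert_sum_zsmul (hx : IsMinGenTuple N x) {s : Fin n} {c : Fin n → ℤ}
    (hgcd : (Ici s).gcd c = 1) :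
    SpanCond N (insert (∑ l, c l • x l) (x '' Set.Iio s)) := by
  refine Set.Subset.antisymm ?_ (closure_subset_setOf_mem_span
    (Set.insert_subset (hx.sum_zsmul_mem c) (Set.image_subset_iff.mpr fun l _ => (hx l).1)))
  rintro w ⟨hwN, hwspan⟩
  obtain ⟨a, rfl⟩ := hx.exists_eq_sum_zsmul hwN
  rw [Set.image_insert_eq, mem_span_insert] at hwspan
  obtain ⟨β, z, hz, hwz⟩ := hwspan
  rw [← Set.image_comp] at hz
  obtain ⟨α, hα, rfl⟩ := exists_eq_sum_smul_of_mem_span_image hz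
  have hcoef : ∀ l, (a l : ℝ) = β * c l + α l := by
    refine Fintype.linearIndependent_iffₛ.mp hx.linearIndependent _ _ ?_
    simp only [Function.comp_apply]
    rw [← toR_sum_zsmul, hwz, toR_sum_zsmul, smul_sum]
    simp only [Function.comp_apply, add_smul, mul_smul, sum_add_distrib]
  have htail : ∀ l ∈ Ici s, (a l : ℝ) = β * c l := fun l hl => by
    rw [hcoef l, hα l (not_lt.mpr (mem_Ici.mp hl)), add_zero]
  -- `β` is an integer since `c` is primitive on `Ici s`, so `w - β y` has no tail
  obtain ⟨q, rfl⟩ := exists_int_eq_of_gcd_eq_one hgcd htail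
  have hsplit : ∑ l, a l • x l = q • ∑ l, c l • x l + ∑ l, (a l - q * c l) • x l := by
    rw [smul_sum, ← sum_add_distrib]
    exact sum_congr rfl fun l _ => by rw [smul_smul, ← add_smul, add_sub_cancel]
  rw [SetLike.mem_coe, hsplit]
  refine add_mem (zsmul_mem (AddSubgroup.subset_closure (Set.mem_insert _ _)) _)
    (AddSubgroup.closure_mono (Set.subset_insert _ _) (sum_mem fun l _ => ?_))
  by_cases hl : l < s
  · exact zsmul_mem (AddSubgroup.subset_closure (Set.mem_image_of_mem x hl)) _
  · have : a l - q * c l = 0 := by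
      exact_mod_cast sub_eq_zero.mpr (htail l (mem_Ici.mpr (not_lt.mp hl)))
    rw [this, zero_smul]
    exact zero_mem _

lemma norm_le_of_gcd_eq_one (hx : IsMinGenTuple N x) {s i : Fin n} (hsi : s ≤ i)
    {c : Fin n → ℤ} (hci : c i ≠ 0) (hgcd : (Ici s).gcd c = 1) :
    ‖toR (x s)‖ ≤ ‖toR (∑ l, c l • x l)‖ :=
  (hx s).2.2.2 _ (hx.sum_zsmul_mem c) (hx.sum_zsmul_notMem_closure hsi hci)
    (hx.spanCond_insert_sum_zsmul hgcd)

lemma monotone_norm (hx : IsMinGenTuple N x) : Monotone fun i => ‖toR (x i)‖ := fun s i hsi => by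
  have hgcd : (Ici s).gcd (Pi.single i (1 : ℤ)) = 1 := Int.eq_one_of_dvd_one
    Finset.Int.finsetGcd_nonneg
    (by simpa using Finset.gcd_dvd (f := Pi.single i (1 : ℤ)) (mem_Ici.mpr hsi))
  have hsum : ∑ l, (Pi.single i (1 : ℤ) : Fin n → ℤ) l • x l = x i := by
    simp [Pi.single_apply, ite_smul]
  have := hx.norm_le_of_gcd_eq_one hsi (c := Pi.single i 1) (by simp) hgcd
  rwa [hsum] at this

lemma norm_le_pow_mul_of_gcd_eq_one (hx : IsMinGenTuple N x) {i : Fin n} (d : ℕ) :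
    ∀ {s : Fin n}, (s : ℕ) + d = i → ∀ {c : Fin n → ℤ}, c i ≠ 0 → (Ici s).gcd c = 1 →
      ‖toR (x i)‖ ≤ ((i : ℝ) + 1) ^ d * ‖toR (∑ l, c l • x l)‖ := by
  induction d with
  | zero =>
    intro s hs c hci hgcd
    obtain rfl : s = i := Fin.ext (by simpa using hs)
    simpa using hx.norm_le_of_gcd_eq_one le_rfl hci hgcd
  | succ d ih =>
    intro s hs c hci hgcd
    set Y := ‖toR (∑ l, c l • x l)‖
    set s' : Fin n := ⟨s + 1, by omega⟩
    have hsi : s ≤ i := Fin.le_def.mpr (by omega)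
    obtain ⟨c', hc'i, hc'gcd, hc'⟩ := exists_gcd_eq_one_and_norm_sum_le (toR ∘ x) (Ici s')
      (mem_Ici.mpr (Fin.le_def.mpr (by simp [s']; omega))) hci
    simp only [Function.comp_apply, ← toR_sum_zsmul] at hc'
    have hhead : ∑ l ∈ (Ici s')ᶜ, ‖toR (x l)‖ ≤ (s + 1) * Y :=
      calc ∑ l ∈ (Ici s')ᶜ, ‖toR (x l)‖ ≤ ∑ l ∈ (Ici s')ᶜ, ‖toR (x s)‖ :=
            sum_le_sum fun l hl => hx.monotone_norm <| by
              rw [mem_compl, mem_Ici, not_le, Fin.lt_def] at hl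
              exact Fin.le_def.mpr (Nat.lt_succ_iff.mp hl)
        _ = (s + 1) * ‖toR (x s)‖ := by
            rw [sum_const, card_compl, Fin.card_Ici, Fintype.card_fin, Nat.sub_sub_self s'.is_lt.le,
              nsmul_eq_mul]
            simp [s']
        _ ≤ (s + 1) * Y := by gcongr; exact hx.norm_le_of_gcd_eq_one hsi hci hgcd
    have hY' : ‖toR (∑ l, c' l • x l)‖ ≤ ((i : ℝ) + 1) * Y := by
      have : (s : ℝ) + 1 ≤ i := by exact_mod_cast (show (s : ℕ) + 1 ≤ i by omega)
      nlinarith [norm_nonneg (toR (∑ l, c l • x l))]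
    calc ‖toR (x i)‖ ≤ ((i : ℝ) + 1) ^ d * ‖toR (∑ l, c' l • x l)‖ :=
          ih (s := s') (by simp [s']; omega) hc'i hc'gcd
      _ ≤ ((i : ℝ) + 1) ^ d * (((i : ℝ) + 1) * Y) := by gcongr
      _ = ((i : ℝ) + 1) ^ (d + 1) * Y := by ring

lemma norm_le_mul_norm_gramSchmidt (hx : IsMinGenTuple N x) (i : Fin n) :
    ‖toR (x i)‖ ≤ 4 / 3 * ((i : ℝ) + 1) ^ (i : ℕ) * (4 * ((i : ℝ) + 1) ^ ((i : ℕ) + 1)) ^ (i : ℕ) *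
      ‖gramSchmidt ℝ (toR ∘ x) i‖ := by
  set T : ℝ := (i : ℝ) + 1
  set X := ‖toR (x i)‖
  set G := ‖gramSchmidt ℝ (toR ∘ x) i‖
  set m : ℕ := 4 * ((i : ℕ) + 1) ^ ((i : ℕ) + 1)
  have hm : (m : ℝ) = 4 * T ^ ((i : ℕ) + 1) := by push_cast [m, T]; ring
  have hT : 0 < T := by positivity
  obtain ⟨c₀, hc₀i, hc₀⟩ :=
    exists_int_coeff_ne_zero_norm_sum_le (toR ∘ x) i (m := m) (by positivity)
  obtain ⟨c, hci, hcgcd, hc⟩ := exists_gcd_eq_one_and_norm_sum_le (toR ∘ x) univ (mem_univ i) hc₀i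
  simp only [compl_univ, sum_empty, zero_div, add_zero] at hc
  have hhead : ∑ l ∈ Iio i, ‖toR (x l)‖ ≤ i * X :=
    calc ∑ l ∈ Iio i, ‖toR (x l)‖ ≤ ∑ l ∈ Iio i, X :=
          sum_le_sum fun l hl => hx.monotone_norm (mem_Iio.mp hl).le
      _ = i * X := by rw [sum_const, Fin.card_Iio, nsmul_eq_mul]
  have hsmall : T ^ (i : ℕ) * (i * X / m) ≤ X / 4 := by
    have : T ^ (i : ℕ) * (i * X / m) = (i / T) * (X / 4) := by
      rw [hm, pow_succ]; field_simp
    rw [this]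
    exact mul_le_of_le_one_left (by positivity) ((div_le_one hT).mpr (by simp [T]))
  have hdesc : X ≤ T ^ (i : ℕ) * ‖∑ l, (c l : ℝ) • toR (x l)‖ := by
    rw [← toR_sum_zsmul]
    refine hx.norm_le_pow_mul_of_gcd_eq_one (s := ⟨0, i.pos⟩) i (by simp) hci ?_
    rwa [show Ici (⟨0, _⟩ : Fin n) = univ from
      eq_univ_of_forall fun l => mem_Ici.mpr (Fin.le_def.mpr (Nat.zero_le _))]
  have : X ≤ T ^ (i : ℕ) * (m ^ (i : ℕ) * G + i * X / m) := by
    refine hdesc.trans (mul_le_mul_of_nonneg_left ?_ (by positivity))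
    refine hc.trans (hc₀.trans ?_)
    simp only [Function.comp_apply, Fin.card_Iio]
    gcongr
  rw [hm] at this hsmall
  nlinarith

lemma norm_mul_Dc_le (hx : IsMinGenTuple N x) (i : Fin n) :
    ‖toR (x i)‖ * Dc i ≤ Dc (i + 1) * ‖gramSchmidt ℝ (toR ∘ x) i‖ := by
  rcases Nat.eq_zero_or_pos i with hi | hi
  · have hIio : Set.Iio i = ∅ := Set.eq_empty_of_forall_notMem fun l hl => by
      simp [Fin.lt_def, hi] at hl
    have hgs := sub_gramSchmidt_mem_span (toR ∘ x) i
    rw [hIio, Set.image_empty, span_empty, mem_bot, sub_eq_zero] at hgs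
    rw [hi, ← hgs]
    simp [Dc]
  · set G := ‖gramSchmidt ℝ (toR ∘ x) i‖
    calc ‖toR (x i)‖ * Dc i
        ≤ (4 / 3 * ((i : ℝ) + 1) ^ (i : ℕ) * (4 * ((i : ℝ) + 1) ^ ((i : ℕ) + 1)) ^ (i : ℕ) * G) *
          Dc i := mul_le_mul_of_nonneg_right (hx.norm_le_mul_norm_gramSchmidt i) (Dc_pos _).le
      _ = (4 / 3 * ((i : ℝ) + 1) ^ (i : ℕ) * (4 * ((i : ℝ) + 1) ^ ((i : ℕ) + 1)) ^ (i : ℕ) *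
          Dc i) * G := by ring
      _ ≤ Dc (i + 1) * G := mul_le_mul_of_nonneg_right (mul_Dc_le_Dc_succ hi) (norm_nonneg _)

lemma prod_norm_le_Dc_mul_prod_norm_gramSchmidt (hx : IsMinGenTuple N x) :
    ∏ t, ‖toR (x t)‖ ≤ Dc n * ∏ t, ‖gramSchmidt ℝ (toR ∘ x) t‖ := by
  have htelescope : ∏ t : Fin n, Dc ((t : ℕ) + 1) = (∏ t : Fin n, Dc t) * Dc n := by
    rw [Fin.prod_univ_eq_prod_range (fun k => Dc (k + 1)), Fin.prod_univ_eq_prod_range Dc,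
      ← mul_one (∏ k ∈ range n, Dc (k + 1)), show (1 : ℝ) = Dc 0 from rfl, ← prod_range_succ',
      prod_range_succ]
  set P := ∏ t : Fin n, Dc t
  refine le_of_mul_le_mul_right ?_ (prod_pos fun t _ => Dc_pos t : 0 < P)
  calc (∏ t, ‖toR (x t)‖) * P = ∏ t, ‖toR (x t)‖ * Dc t := prod_mul_distrib.symm
    _ ≤ ∏ t : Fin n, Dc ((t : ℕ) + 1) * ‖gramSchmidt ℝ (toR ∘ x) t‖ :=
        prod_le_prod (fun t _ => mul_nonneg (norm_nonneg _) (Dc_pos _).le)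
          fun t _ => hx.norm_mul_Dc_le t
    _ = (Dc n * ∏ t, ‖gramSchmidt ℝ (toR ∘ x) t‖) * P := by
        rw [prod_mul_distrib, htelescope]; ring

end IsMinGenTuple

theorem stmt3_general (n : ℕ) (N : AddSubgroup (Fin n → ℤ))
    (x : Fin n → (Fin n → ℤ)) (hx : IsMinGenTuple N x) (a : Fin n → ℝ) :
    ∀ i : Fin n, (1 / Dc n) * ‖a i • toR (x i)‖ ≤ ‖∑ j, a j • toR (x j)‖ := by
  intro i
  obtain ⟨m, rfl⟩ := Nat.exists_eq_succ_of_ne_zero i.pos.ne'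
  rw [one_div_mul_eq_div, div_le_iff₀' (Dc_pos _)]
  exact norm_smul_le_mul_norm_sum (f := toR ∘ x) (by simp) hx.linearIndependent.ne_zero
    hx.prod_norm_le_Dc_mul_prod_norm_gramSchmidt a i

/-- For every `n ≥ 1`, every finite-index subgroup `N` of `ℤⁿ`, every minimal
generating tuple `(x₁,…,xₙ)` of `N`, and all reals `a₁,…,aₙ`, one has
`‖a₁x₁ + … + aₙxₙ‖ ≥ (1/Dₙ) · maxᵢ ‖aᵢxᵢ‖` (stated as the inequality for every `i`). -/
theorem stmt3 (n : ℕ) (hn : 1 ≤ n) (N : AddSubgroup (Fin n → ℤ)) (hN : N.FiniteIndex)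
    (x : Fin n → (Fin n → ℤ)) (hx : IsMinGenTuple N x) (a : Fin n → ℝ) :
    ∀ i : Fin n, (1 / Dc n) * ‖a i • toR (x i)‖ ≤ ‖∑ j, a j • toR (x j)‖ :=
  stmt3_general n N x hx a
end

section
/- Let H be a group with a finite generating set S, let G be a finite-index normal subgroup of H, and let T be a finite generating set of G. Then there exists a constant C > 0 such that for every finite-index normal subgroup N of H, diam_T(G/(N∩G)) ≤ C·diam_S(H/N). -/
/-- The word length of `h` with respect to the (symmetrized) generating set `S`. -/
noncomputable def wordLength {H : Type*} [Group H] (S : Set H) (h : H) : ℕ :=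
  sInf {ℓ : ℕ | ∃ w : List H, (∀ g ∈ w, g ∈ S ∪ S⁻¹) ∧ w.prod = h ∧ w.length = ℓ}

/-- The diameter of `H/N` in the word metric induced by the generating set `S` of `H`:
the supremum over cosets `hN` of the minimal word length of a representative. -/
noncomputable def quotDiam {H : Type*} [Group H] (S : Set H) (N : Subgroup H) : ℕ :=
  sSup (Set.range fun h : H => sInf {ℓ : ℕ | ∃ n ∈ N, wordLength S (h * n) = ℓ})

/-!
Schreier rewriting controls word lengths in both directions. Rewriting an `S`-word for `g ∈ G`
through a transversal of `G` writes `g` as a product of equally many Schreier generators, which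
form a fixed finite subset of `G`; hence `|g|_T ≤ K |g|_S`. Rewriting through a transversal of `N`
by elements of length at most `D = diam_S(H/N)` shows that `N` is generated by its elements of
length at most `2D + 1`. In the finite group `H/G` a product of such generators can be shortened
to at most `[H : G]` factors, so every coset `nG` with `n ∈ N` contains an element of `N` of length
`O(D)`. Correcting a short representative `gn` of `gN` by such an element lands in `G ∩ gN` with
`S`-length, hence `T`-length, `O(D)`. If `D = 0` then `N = H` and both diameters vanish.
-/

open Subgroup

section WordLength

variable {H : Type*} [Group H] {S : Set H}

lemma wordLength_le_length {w : List H} (hw : ∀ g ∈ w, g ∈ S ∪ S⁻¹) :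
    wordLength S w.prod ≤ w.length :=
  Nat.sInf_le ⟨w, hw, rfl, rfl⟩

lemma exists_word_length_eq_wordLength (hS : closure S = ⊤) (h : H) :
    ∃ w : List H, (∀ g ∈ w, g ∈ S ∪ S⁻¹) ∧ w.prod = h ∧ w.length = wordLength S h := by
  have hmem : h ∈ Submonoid.closure (S ∪ S⁻¹) := by
    rw [← closure_toSubmonoid, hS]
    trivial
  obtain ⟨w, hw, hprod⟩ := Submonoid.exists_list_of_mem_closure hmem
  exact Nat.sInf_mem (s := {ℓ | ∃ w : List H, (∀ g ∈ w, g ∈ S ∪ S⁻¹) ∧ w.prod = h ∧ w.length = ℓ})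
    ⟨w.length, w, hw, hprod, rfl⟩

lemma wordLength_one : wordLength S (1 : H) = 0 :=
  Nat.le_zero.mp (wordLength_le_length (w := []) (by simp))

lemma wordLength_le_one_of_mem {s : H} (hs : s ∈ S ∪ S⁻¹) : wordLength S s ≤ 1 := by
  simpa using wordLength_le_length (w := [s]) (by simpa using hs)

lemma eq_one_of_wordLength_eq_zero (hS : closure S = ⊤) {h : H} (h0 : wordLength S h = 0) :
    h = 1 := by
  obtain ⟨w, -, rfl, hw⟩ := exists_word_length_eq_wordLength hS h
  rw [h0, List.length_eq_zero_iff] at hw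
  rw [hw, List.prod_nil]

lemma wordLength_mul_le (hS : closure S = ⊤) (a b : H) :
    wordLength S (a * b) ≤ wordLength S a + wordLength S b := by
  obtain ⟨u, hu, rfl, hul⟩ := exists_word_length_eq_wordLength hS a
  obtain ⟨v, hv, rfl, hvl⟩ := exists_word_length_eq_wordLength hS b
  rw [← hul, ← hvl, ← List.length_append, ← List.prod_append]
  exact wordLength_le_length fun g hg => (List.mem_append.mp hg).elim (hu g) (hv g)

lemma wordLength_inv_le (hS : closure S = ⊤) (a : H) : wordLength S a⁻¹ ≤ wordLength S a := by
  obtain ⟨w, hw, rfl, hwl⟩ := exists_word_length_eq_wordLength hS a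
  rw [← hwl, List.prod_inv_reverse, ← List.length_map (f := (·⁻¹)), ← List.length_reverse]
  refine wordLength_le_length fun g hg => ?_
  obtain ⟨s, hs, rfl⟩ := List.mem_map.mp (List.mem_reverse.mp hg)
  simpa [or_comm] using hw s hs

lemma wordLength_list_prod_le (hS : closure S = ⊤) {K : ℕ} {l : List H}
    (hl : ∀ g ∈ l, wordLength S g ≤ K) : wordLength S l.prod ≤ K * l.length := by
  induction l with
  | nil => simp [wordLength_one]
  | cons g l ih =>
    rw [List.prod_cons, List.length_cons, mul_add_one, add_comm (K * _)]
    exact (wordLength_mul_le hS _ _).trans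
      (add_le_add (hl g List.mem_cons_self) (ih fun x hx => hl x (List.mem_cons_of_mem _ hx)))

end WordLength

section QuotDiam

variable {H : Type*} [Group H] {S : Set H} {N : Subgroup H}

lemma quotDiam_le {B : ℕ} (hB : ∀ h : H, ∃ n ∈ N, wordLength S (h * n) ≤ B) :
    quotDiam S N ≤ B := by
  refine csSup_le' ?_
  rintro _ ⟨h, rfl⟩
  obtain ⟨n, hn, hle⟩ := hB h
  refine (Nat.sInf_le ?_).trans hle
  exact ⟨n, hn, rfl⟩

lemma quotDiam_top : quotDiam S (⊤ : Subgroup H) = 0 :=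
  Nat.le_zero.mp <| quotDiam_le fun h => ⟨h⁻¹, mem_top _, by simp [wordLength_one]⟩

lemma exists_mem_wordLength_mul_le_quotDiam [N.FiniteIndex] (h : H) :
    ∃ n ∈ N, wordLength S (h * n) ≤ quotDiam S N := by
  set lengths : H → Set ℕ := fun a => {ℓ | ∃ n ∈ N, wordLength S (a * n) = ℓ}
  have lengths_subset : ∀ a b : H, a⁻¹ * b ∈ N → lengths b ⊆ lengths a := by
    rintro a b hab _ ⟨n, hn, rfl⟩
    exact ⟨a⁻¹ * b * n, N.mul_mem hab hn, by rw [mul_assoc a⁻¹, mul_inv_cancel_left]⟩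
  have hbdd : BddAbove (Set.range fun a => sInf (lengths a)) := by
    refine ((Set.finite_range fun q : H ⧸ N => sInf (lengths q.out)).subset ?_).bddAbove
    rintro _ ⟨a, rfl⟩
    have hout := QuotientGroup.eq.mp (QuotientGroup.out_eq' (a : H ⧸ N))
    refine ⟨a, congrArg sInf (subset_antisymm (lengths_subset _ _ ?_) (lengths_subset _ _ hout))⟩
    simpa using N.inv_mem hout
  obtain ⟨n, hn, hlen⟩ := Nat.sInf_mem (s := lengths h) ⟨_, 1, N.one_mem, rfl⟩
  exact ⟨n, hn, hlen ▸ le_csSup hbdd ⟨h, rfl⟩⟩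

lemma eq_top_of_quotDiam_eq_zero (hS : closure S = ⊤) [N.FiniteIndex] (h0 : quotDiam S N = 0) :
    N = ⊤ := by
  refine eq_top_iff.mpr fun h _ => ?_
  obtain ⟨n, hn, hle⟩ := exists_mem_wordLength_mul_le_quotDiam (S := S) (N := N) h
  rw [h0, Nat.le_zero] at hle
  rw [eq_inv_of_mul_eq_one_left (eq_one_of_wordLength_eq_zero hS hle)]
  exact N.inv_mem hn

lemma exists_section_wordLength_le_quotDiam [N.Normal] [N.FiniteIndex] :
    ∃ σ : H ⧸ N → H, σ 1 = 1 ∧ (∀ q, (σ q : H ⧸ N) = q) ∧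
      ∀ q, wordLength S (σ q) ≤ quotDiam S N := by
  classical
  have hrep (q : H ⧸ N) : ∃ h : H, (h : H ⧸ N) = q ∧ wordLength S h ≤ quotDiam S N := by
    obtain ⟨n, hn, hle⟩ := exists_mem_wordLength_mul_le_quotDiam (S := S) (N := N) q.out
    exact ⟨q.out * n, by rw [QuotientGroup.mk_mul_of_mem _ hn, QuotientGroup.out_eq'], hle⟩
  choose r hr hrlen using hrep
  refine ⟨fun q => if q = 1 then 1 else r q, if_pos rfl, fun q => ?_, fun q => ?_⟩
  · dsimp only
    split_ifs with hq
    · exact hq ▸ QuotientGroup.mk_one N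
    · exact hr q
  · dsimp only
    split_ifs
    · simp [wordLength_one]
    · exact hrlen q

end QuotDiam

section Schreier

variable {H : Type*} [Group H] {N : Subgroup H} [N.Normal]

def schreierSet (σ : H ⧸ N → H) (X : Set H) : Set H :=
  Set.image2 (fun (q : H ⧸ N) (s : H) => σ q * s * (σ (q * s))⁻¹) Set.univ X

lemma schreierSet_subset {σ : H ⧸ N → H} (hσ : ∀ q, (σ q : H ⧸ N) = q) (X : Set H) :
    schreierSet σ X ⊆ N := by
  rintro _ ⟨q, -, s, -, rfl⟩
  rw [SetLike.mem_coe, ← QuotientGroup.eq_one_iff, QuotientGroup.mk_mul, QuotientGroup.mk_mul,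
    QuotientGroup.mk_inv, hσ, hσ, mul_inv_cancel]

lemma exists_schreierSet_list_mul_eq (σ : H ⧸ N → H) {X : Set H}
    (q : H ⧸ N) {w : List H} (hw : ∀ s ∈ w, s ∈ X) :
    ∃ l : List H, (∀ b ∈ l, b ∈ schreierSet σ X) ∧ σ q * w.prod = l.prod * σ (q * w.prod) ∧
      l.length = w.length := by
  induction w generalizing q with
  | nil => exact ⟨[], by simp, by simp, rfl⟩
  | cons s w ih =>
    obtain ⟨l, hl, hprod, hlen⟩ := ih (q * s) fun x hx => hw x (List.mem_cons_of_mem _ hx)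
    refine ⟨σ q * s * (σ (q * s))⁻¹ :: l, ?_, ?_, by simp [hlen]⟩
    · intro b hb
      rcases List.mem_cons.mp hb with rfl | hb
      · exact ⟨q, trivial, s, hw s List.mem_cons_self, rfl⟩
      · exact hl b hb
    · rw [List.prod_cons, List.prod_cons, QuotientGroup.mk_mul, ← mul_assoc q, ← mul_assoc,
        mul_assoc _ l.prod, ← hprod]
      group

lemma exists_schreierSet_list_prod_eq {S : Set H} (hS : closure S = ⊤) {σ : H ⧸ N → H}
    (hσ1 : σ 1 = 1) {n : H} (hn : n ∈ N) :
    ∃ l : List H, (∀ b ∈ l, b ∈ schreierSet σ (S ∪ S⁻¹)) ∧ l.prod = n ∧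
      l.length = wordLength S n := by
  obtain ⟨w, hw, rfl, hwlen⟩ := exists_word_length_eq_wordLength hS n
  obtain ⟨l, hl, hprod, hlen⟩ := exists_schreierSet_list_mul_eq σ 1 hw
  rw [one_mul, (QuotientGroup.eq_one_iff _).mpr hn, hσ1, one_mul, mul_one] at hprod
  exact ⟨l, hl, hprod.symm, hlen.trans hwlen⟩

end Schreier

lemma exists_sublist_apply_prod_eq_length_le_card {M F : Type*} [Monoid M] [Monoid F]
    [Finite F] (f : M →* F) (l : List M) :
    ∃ l' : List M, l'.Sublist l ∧ f l'.prod = f l.prod ∧ l'.length ≤ Nat.card F := by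
  induction hn : l.length using Nat.strong_induction_on generalizing l with
  | _ n ih =>
  by_cases hl : l.length ≤ Nat.card F
  · exact ⟨l, List.Sublist.refl l, rfl, hl⟩
  have hcollide : ¬ Function.Injective fun i : Fin (l.length + 1) => f (l.take i).prod := by
    intro hinj
    have := Nat.card_le_card_of_injective _ hinj
    rw [Nat.card_eq_fintype_card, Fintype.card_fin] at this
    omega
  obtain ⟨i, j, hij, hne⟩ := Function.not_injective_iff.mp hcollide
  wlog hlt : (i : ℕ) < j generalizing i j
  · exact this j i hij.symm hne.symm
      (lt_of_le_of_ne (not_lt.mp hlt) (Fin.val_ne_of_ne hne.symm))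
  set l₂ := l.take i ++ l.drop j
  have hsub : l₂.Sublist l := by
    conv_rhs => rw [← List.take_append_drop j l]
    exact (List.take_sublist_take_left hlt.le).append (List.Sublist.refl _)
  have hprod : f l₂.prod = f l.prod := by
    conv_rhs => rw [← List.take_append_drop j l]
    simp only [l₂, List.prod_append, map_mul, hij]
  have hlen : l₂.length < n := by
    simp only [l₂, List.length_append, List.length_take, List.length_drop]
    omega
  obtain ⟨l', hl', hprod', hlen'⟩ := ih _ hlen l₂ rfl
  exact ⟨l', hl'.trans hsub, hprod'.trans hprod, hlen'⟩

section Undistorted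

variable {H : Type*} [Group H] {S : Set H}

lemma exists_wordLength_subtype_le_mul (hSfin : S.Finite) (hS : closure S = ⊤)
    (G : Subgroup H) [G.Normal] [G.FiniteIndex] {T : Set G} (hT : closure T = ⊤) :
    ∃ K : ℕ, ∀ g : G, wordLength T g ≤ K * wordLength S (g : H) := by
  obtain ⟨σ, hσ1, hσ, -⟩ := exists_section_wordLength_le_quotDiam (S := S) (N := G)
  have hfin : (schreierSet σ (S ∪ S⁻¹)).Finite := Set.finite_univ.image2 _ (hSfin.union hSfin.inv)
  obtain ⟨K, hK⟩ := ((hfin.preimage Subtype.val_injective.injOn).image (wordLength T)).bddAbove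
  refine ⟨K, fun g => ?_⟩
  obtain ⟨l, hl, hprod, hlen⟩ := exists_schreierSet_list_prod_eq hS hσ1 g.2
  lift l to List G using fun b hb => schreierSet_subset hσ _ (hl b hb)
  rw [← Subgroup.val_list_prod] at hprod
  obtain rfl := Subtype.ext hprod
  rw [← hlen, List.length_map]
  exact wordLength_list_prod_le hT fun b hb => hK ⟨b, hl b (List.mem_map_of_mem hb), rfl⟩

end Undistorted

section Correction

variable {H : Type*} [Group H] {S : Set H} {N : Subgroup H} [N.Normal] [N.FiniteIndex]

lemma exists_list_prod_eq_wordLength_le (hS : closure S = ⊤) {n : H} (hn : n ∈ N) :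
    ∃ l : List H, (∀ b ∈ l, b ∈ N ∧ wordLength S b ≤ 2 * quotDiam S N + 1) ∧ l.prod = n := by
  obtain ⟨σ, hσ1, hσ, hσlen⟩ := exists_section_wordLength_le_quotDiam (S := S) (N := N)
  obtain ⟨l, hl, hprod, -⟩ := exists_schreierSet_list_prod_eq hS hσ1 hn
  refine ⟨l, fun b hb => ⟨schreierSet_subset hσ _ (hl b hb), ?_⟩, hprod⟩
  obtain ⟨q, -, s, hs, rfl⟩ := hl b hb
  calc wordLength S (σ q * s * (σ (q * s))⁻¹)
      ≤ wordLength S (σ q) + wordLength S s + wordLength S (σ (q * s)) :=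
        (wordLength_mul_le hS _ _).trans <|
          add_le_add (wordLength_mul_le hS _ _) (wordLength_inv_le hS _)
    _ ≤ quotDiam S N + 1 + quotDiam S N :=
        add_le_add (add_le_add (hσlen q) (wordLength_le_one_of_mem hs)) (hσlen _)
    _ = 2 * quotDiam S N + 1 := by ring

lemma exists_mem_apply_eq_wordLength_le (hS : closure S = ⊤) {F : Type*} [Monoid F] [Finite F]
    (f : H →* F) {n : H} (hn : n ∈ N) :
    ∃ ν ∈ N, f ν = f n ∧ wordLength S ν ≤ (2 * quotDiam S N + 1) * Nat.card F := by
  obtain ⟨l, hl, rfl⟩ := exists_list_prod_eq_wordLength_le hS hn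
  obtain ⟨l', hsub, hprod, hlen⟩ := exists_sublist_apply_prod_eq_length_le_card f l
  refine ⟨l'.prod, N.list_prod_mem fun b hb => (hl b (hsub.subset hb)).1, hprod, ?_⟩
  exact (wordLength_list_prod_le hS fun b hb => (hl b (hsub.subset hb)).2).trans
    (Nat.mul_le_mul_left _ hlen)

lemma quotDiam_subgroupOf_le (hS : closure S = ⊤) {G : Subgroup H} [G.Normal] [G.FiniteIndex]
    {T : Set G} {K : ℕ} (hK : ∀ g : G, wordLength T g ≤ K * wordLength S (g : H)) :
    quotDiam T (N.subgroupOf G) ≤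
      K * (quotDiam S N + (2 * quotDiam S N + 1) * Nat.card (H ⧸ G)) := by
  refine quotDiam_le fun g => ?_
  obtain ⟨n, hn, hgn⟩ := exists_mem_wordLength_mul_le_quotDiam (S := S) (N := N) (g : H)
  obtain ⟨ν, hν, hνn, hνlen⟩ := exists_mem_apply_eq_wordLength_le hS (QuotientGroup.mk' G) hn
  have hG : n * ν⁻¹ ∈ G := by
    rw [← QuotientGroup.eq_one_iff, QuotientGroup.mk_mul, QuotientGroup.mk_inv]
    exact mul_inv_eq_one.mpr hνn.symm
  refine ⟨⟨n * ν⁻¹, hG⟩, mem_subgroupOf.mpr (N.mul_mem hn (N.inv_mem hν)), ?_⟩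
  calc wordLength T (g * ⟨n * ν⁻¹, hG⟩) ≤ K * wordLength S ((g : H) * n * ν⁻¹) := by
        simpa [mul_assoc] using hK (g * ⟨n * ν⁻¹, hG⟩)
    _ ≤ K * (quotDiam S N + (2 * quotDiam S N + 1) * Nat.card (H ⧸ G)) :=
        Nat.mul_le_mul_left _ <| (wordLength_mul_le hS _ _).trans <|
          add_le_add hgn ((wordLength_inv_le hS ν).trans hνlen)

end Correction

theorem stmt8_general {H : Type*} [Group H] (S : Set H) (hSfin : S.Finite)
    (hSgen : Subgroup.closure S = ⊤)
    (G : Subgroup H) (hGnorm : G.Normal) (hGfin : G.FiniteIndex)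
    (T : Set G) (hTgen : Subgroup.closure T = ⊤) :
    ∃ C : ℝ, 0 < C ∧ ∀ N : Subgroup H, N.Normal → N.FiniteIndex →
      (quotDiam T (N.subgroupOf G) : ℝ) ≤ C * (quotDiam S N : ℝ) := by
  obtain ⟨K, hK⟩ := exists_wordLength_subtype_le_mul hSfin hSgen G hTgen
  set m := Nat.card (H ⧸ G)
  refine ⟨K * (1 + 3 * m) + 1, by positivity, fun N _ _ => ?_⟩
  obtain hD | hD := Nat.eq_zero_or_pos (quotDiam S N)
  · have hN := eq_top_of_quotDiam_eq_zero hSgen hD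
    simp [hN, top_subgroupOf, quotDiam_top]
  · have hm : (2 * quotDiam S N + 1) * m ≤ 3 * m * quotDiam S N := by nlinarith
    have hle : quotDiam T (N.subgroupOf G) ≤ (K * (1 + 3 * m) + 1) * quotDiam S N :=
      calc quotDiam T (N.subgroupOf G)
          ≤ K * (quotDiam S N + (2 * quotDiam S N + 1) * m) := quotDiam_subgroupOf_le hSgen hK
        _ ≤ K * (quotDiam S N + 3 * m * quotDiam S N) := by gcongr
        _ ≤ (K * (1 + 3 * m) + 1) * quotDiam S N := by nlinarith
    exact_mod_cast hle

/-- Let `H` be a group with a finite generating set `S`, let `G` be a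
finite-index normal subgroup of `H`, and let `T` be a finite generating set of `G`.
Then there is a constant `C > 0` such that for every finite-index normal subgroup `N`
of `H`, `diam_T(G/(N∩G)) ≤ C · diam_S(H/N)`. -/
theorem stmt8 {H : Type*} [Group H] (S : Set H) (hSfin : S.Finite)
    (hSgen : Subgroup.closure S = ⊤)
    (G : Subgroup H) (hGnorm : G.Normal) (hGfin : G.FiniteIndex)
    (T : Set G) (hTfin : T.Finite) (hTgen : Subgroup.closure T = ⊤) :
    ∃ C : ℝ, 0 < C ∧ ∀ N : Subgroup H, N.Normal → N.FiniteIndex →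
      (quotDiam T (N.subgroupOf G) : ℝ) ≤ C * (quotDiam S N : ℝ) :=
  stmt8_general S hSfin hSgen G hGnorm hGfin T hTgen
end

section
/- Let H be a finite group with a normal abelian subgroup A that is generated by n ≥ 1 elements, and let d = [H:A] be the index of A in H. Then the number of normal subgroups N of H with N ∩ A = {1} is at most 2^d · d^{nd}. -/
/-!
A normal subgroup `N` with `N ⊓ A = ⊥` maps isomorphically onto its image `Q ≤ H ⧸ A`, so it is
the image of a section `Q → H`. Fix one such `M` for every possible `Q`. Since `M` is normal and
meets the normal subgroup `A` trivially, `M` centralises `A`; hence if `x ∈ N` and `y ∈ M` lie over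
the same coset, then `a = x y⁻¹ ∈ A` commutes with `y`, and `xᵈ = aᵈ yᵈ` with `d = [H:A]` gives
`aᵈ = 1`. So `N` is determined by `Q` (at most `2ᵈ` choices) and a map `H ⧸ A → A[d]`, and in an
abelian group with `n` generators `|A[d]| = |A / Aᵈ| ≤ dⁿ`.
-/

theorem card_pow_eq_one_le_pow_rank {G : Type*} [CommGroup G] [Finite G] {d : ℕ} (hd : 0 < d) :
    Nat.card {g : G // g ^ d = 1} ≤ d ^ Group.rank G := by
  set φ : G →* G := powMonoidHom d
  have hker : Nat.card φ.ker = φ.range.index := by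
    have h := φ.ker.card_mul_index
    rw [Subgroup.index_ker, ← φ.range.card_mul_index, mul_comm] at h
    exact Nat.eq_of_mul_eq_mul_left Nat.card_pos h
  have hexp : ∀ q : G ⧸ φ.range, q ^ d = 1 := by
    rintro ⟨g⟩
    exact (QuotientGroup.eq_one_iff _).mpr ⟨g, rfl⟩
  calc Nat.card {g : G // g ^ d = 1} = Nat.card (G ⧸ φ.range) := hker
    _ ≤ d ^ Group.rank (G ⧸ φ.range) :=
      Nat.le_of_dvd (by positivity) (card_dvd_exponent_pow_rank' _ hexp)
    _ ≤ d ^ Group.rank G :=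
      Nat.pow_le_pow_right hd (Group.rank_le_of_surjective _ (QuotientGroup.mk'_surjective _))

namespace MonoidHom

variable {G Q : Type*} [Group G] [Group Q] (f : G →* Q) (N : Subgroup G)

noncomputable def sectionOn : Q → G :=
  Function.extend (fun x : N => f x) Subtype.val 1

theorem sectionOn_mem (q : Q) : f.sectionOn N q ∈ N := by
  classical
  rw [sectionOn, Function.extend_def]
  split_ifs with h
  · exact (Classical.choose h).2
  · exact N.one_mem

open Classical in
theorem map_sectionOn (q : Q) : f (f.sectionOn N q) = if q ∈ N.map f then q else 1 := by
  have hmem : q ∈ N.map f ↔ ∃ x : N, f x = q := by simp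
  rw [sectionOn, Function.extend_def]
  split_ifs with h h' h'
  · exact Classical.choose_spec h
  · exact absurd (hmem.mpr h) h'
  · exact absurd (hmem.mp h') h
  · exact map_one f

variable {f N}

theorem sectionOn_apply (hN : Disjoint N f.ker) {x : G} (hx : x ∈ N) :
    f.sectionOn N (f x) = x := by
  have hinj : Function.Injective (f.domRestrict N) := by
    rw [← ker_eq_bot_iff, ker_domRestrict, Subgroup.subgroupOf_eq_bot]
    exact hN.symm
  exact hinj.extend_apply Subtype.val 1 ⟨x, hx⟩

theorem le_of_sectionOn_eq {M : Subgroup G} (hN : Disjoint N f.ker)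
    (h : f.sectionOn N = f.sectionOn M) : N ≤ M := fun x hx =>
  sectionOn_apply hN hx ▸ h ▸ f.sectionOn_mem M (f x)

theorem sectionOn_mul_inv_mem_ker {M : Subgroup G} (h : N.map f = M.map f) (q : Q) :
    f.sectionOn N q * (f.sectionOn M q)⁻¹ ∈ f.ker := by
  rw [mem_ker, map_mul, map_inv, map_sectionOn, map_sectionOn, h, mul_inv_cancel]

end MonoidHom

namespace Subgroup

variable {G : Type*} [Group G] {A N M : Subgroup G} [A.Normal]

theorem pow_index_eq_one_of_disjoint (hN : Disjoint N A) {x : G} (hx : x ∈ N) :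
    x ^ A.index = 1 :=
  hN.le_bot ⟨N.pow_mem hx _, A.pow_index_mem x⟩

theorem pow_index_mul_inv_eq_one (hMn : M.Normal) (hN : Disjoint N A) (hM : Disjoint M A)
    {x y : G} (hx : x ∈ N) (hy : y ∈ M) (hxy : x * y⁻¹ ∈ A) : (x * y⁻¹) ^ A.index = 1 := by
  have hcomm : Commute (x * y⁻¹) y :=
    (commute_of_normal_of_disjoint M A hMn ‹_› hM y _ hy hxy).symm
  have h := hcomm.mul_pow A.index
  rw [inv_mul_cancel_right, pow_index_eq_one_of_disjoint hN hx,
    pow_index_eq_one_of_disjoint hM hy, mul_one] at h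
  exact h.symm

end Subgroup

theorem Nat.card_set_eq_two_pow {α : Type*} [Finite α] : Nat.card (Set α) = 2 ^ Nat.card α := by
  classical
  have := Fintype.ofFinite α
  rw [Nat.card_eq_fintype_card, Fintype.card_set, Nat.card_eq_fintype_card]

theorem ncard_normal_inf_eq_bot_le {H : Type*} [Group H] [Finite H] (A : Subgroup H) [A.Normal] :
    {N : Subgroup H | N.Normal ∧ N ⊓ A = ⊥}.ncard ≤
      2 ^ A.index * Nat.card {a : A // a ^ A.index = 1} ^ A.index := by
  set π := QuotientGroup.mk' A
  set S := {N : Subgroup H | N.Normal ∧ N ⊓ A = ⊥}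
  have hker : π.ker = A := QuotientGroup.ker_mk' A
  have hdisj (N : S) : Disjoint N.1 A := disjoint_iff.mpr N.2.2
  have : Nonempty S := ⟨⟨⊥, Subgroup.normal_bot, bot_inf_eq A⟩⟩
  let ref : Subgroup (H ⧸ A) → S := Function.invFun fun N : S => N.1.map π
  have href (N : S) : (ref (N.1.map π)).1.map π = N.1.map π :=
    Function.invFun_eq (f := fun N : S => N.1.map π) ⟨N, rfl⟩
  have hdiff (N : S) (q : H ⧸ A) :
      π.sectionOn N q * (π.sectionOn (ref (N.1.map π)) q)⁻¹ ∈ A :=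
    (QuotientGroup.eq_one_iff _).mp (MonoidHom.sectionOn_mul_inv_mem_ker (href N).symm q)
  let Φ (N : S) : Subgroup (H ⧸ A) × (H ⧸ A → {a : A // a ^ A.index = 1}) :=
    (N.1.map π, fun q => ⟨⟨_, hdiff N q⟩, Subtype.ext <|
      Subgroup.pow_index_mul_inv_eq_one (ref _).2.1 (hdisj N) (hdisj _) (π.sectionOn_mem _ q)
        (π.sectionOn_mem _ q) (hdiff N q)⟩)
  have hΦ : Function.Injective Φ := by
    intro N N' h
    have hsec (q : H ⧸ A) : π.sectionOn N q = π.sectionOn N' q := by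
      have himg : N.1.map π = N'.1.map π := congrArg Prod.fst h
      have := congrArg (fun φ => ((φ.2 q : A) : H)) h
      simp only [Φ, himg] at this
      exact mul_right_cancel this
    have hle {N N' : S} (h : π.sectionOn N = π.sectionOn N') : N.1 ≤ N' :=
      MonoidHom.le_of_sectionOn_eq (by rw [hker]; exact hdisj N) h
    exact Subtype.ext (le_antisymm (hle (funext hsec)) (hle (funext hsec).symm))
  calc S.ncard = Nat.card S := (Nat.card_coe_set_eq S).symm
    _ ≤ Nat.card (Subgroup (H ⧸ A) × (H ⧸ A → {a : A // a ^ A.index = 1})) :=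
      Nat.card_le_card_of_injective Φ hΦ
    _ ≤ 2 ^ A.index * Nat.card {a : A // a ^ A.index = 1} ^ A.index := by
      rw [Nat.card_prod, Nat.card_fun, ← Subgroup.index_eq_card]
      gcongr
      calc Nat.card (Subgroup (H ⧸ A)) ≤ Nat.card (Set (H ⧸ A)) :=
            Nat.card_le_card_of_injective _ SetLike.coe_injective
        _ = 2 ^ A.index := by rw [Nat.card_set_eq_two_pow, Subgroup.index_eq_card]

theorem stmt10_general {H : Type*} [Group H] [Finite H] (A : Subgroup H) (hAnorm : A.Normal)
    (hAcomm : ∀ x y : A, x * y = y * x)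
    (n : ℕ)
    (hAgen : ∃ T : Finset H, T.card ≤ n ∧ Subgroup.closure (T : Set H) = A) :
    {N : Subgroup H | N.Normal ∧ N ⊓ A = ⊥}.ncard ≤
      2 ^ A.index * A.index ^ (n * A.index) := by
  obtain ⟨T, hTcard, hTA⟩ := hAgen
  let _ : CommGroup A := { mul_comm := hAcomm }
  have hrank : Group.rank A ≤ n :=
    (Subgroup.rank_congr hTA.symm).trans_le ((Subgroup.rank_closure_finset_le_card T).trans hTcard)
  have hindex : 0 < A.index := Nat.pos_of_ne_zero A.index_ne_zero_of_finite
  have htorsion : Nat.card {a : A // a ^ A.index = 1} ≤ A.index ^ n :=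
    (card_pow_eq_one_le_pow_rank hindex).trans (Nat.pow_le_pow_right hindex hrank)
  calc {N : Subgroup H | N.Normal ∧ N ⊓ A = ⊥}.ncard
      ≤ 2 ^ A.index * Nat.card {a : A // a ^ A.index = 1} ^ A.index :=
        ncard_normal_inf_eq_bot_le A
    _ ≤ 2 ^ A.index * (A.index ^ n) ^ A.index := by gcongr
    _ = 2 ^ A.index * A.index ^ (n * A.index) := by rw [← pow_mul]

/-- Let `H` be a finite group with a normal abelian subgroup `A` generated
by `n ≥ 1` elements, and let `d = [H:A]`.  Then the number of normal subgroups `N` of `H`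
with `N ∩ A = {1}` is at most `2^d · d^(n·d)`. -/
theorem stmt10 {H : Type*} [Group H] [Finite H] (A : Subgroup H) (hAnorm : A.Normal)
    (hAcomm : ∀ x y : A, x * y = y * x)
    (n : ℕ) (hn : 1 ≤ n)
    (hAgen : ∃ T : Finset H, T.card ≤ n ∧ Subgroup.closure (T : Set H) = A) :
    {N : Subgroup H | N.Normal ∧ N ⊓ A = ⊥}.ncard ≤
      2 ^ A.index * A.index ^ (n * A.index) :=
  stmt10_general A hAnorm hAcomm n hAgen
end

section
/- Let n ≥ 3 and let H be a group with a normal subgroup A of finite index such that A is isomorphic to ℤⁿ. Then there exists a constant C > 0 such that for every finite-index subgroup 𝒩 of A, the number of normal subgroups N of H with N ∩ A = 𝒩 is at most C. -/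
/-!
Let `k = [H : A]`. If some normal `N` has `N ⊓ A = M`, then `M` is normal, and in `H ⧸ M` the
images of such `N` are normal subgroups meeting the abelian normal subgroup `B = A ⧸ M` trivially.
Such a subgroup centralizes `B`, consists of `k`-th roots of unity, and meets each coset of `B` in
at most one point; two candidate points of the same coset differ by an element of the `k`-torsion
`B[k]`. So it is one of at most `(|B[k]| + 1) ^ k` partial sections of `H ⧸ M → (H ⧸ M) ⧸ B`.
Finally `|B[k]| = [B : B ^ k] ≤ [ℤⁿ : kℤⁿ] = k ^ n`, since `B` is a finite quotient of `ℤⁿ`.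
-/

open Function QuotientGroup

theorem card_pow_eq_one_eq_index_range_powMonoidHom {Q : Type*} [CommGroup Q] [Finite Q]
    (k : ℕ) : Nat.card {q : Q // q ^ k = 1} = (powMonoidHom k : Q →* Q).range.index := by
  set p : Q →* Q := powMonoidHom k
  have hker : Nat.card {q : Q // q ^ k = 1} = Nat.card p.ker := rfl
  have hrange : 0 < Nat.card p.range := Nat.card_pos
  have hcard := p.ker.card_mul_index
  rw [Subgroup.index_ker, ← p.range.card_mul_index, mul_comm] at hcard
  rw [hker]
  exact Nat.eq_of_mul_eq_mul_left hrange hcard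

theorem index_range_powMonoidHom_dvd_of_surjective {P Q : Type*} [CommGroup P] [CommGroup Q]
    {f : P →* Q} (hf : Surjective f) (k : ℕ) :
    (powMonoidHom k : Q →* Q).range.index ∣ (powMonoidHom k : P →* P).range.index := by
  have hcomm : (powMonoidHom k).comp f = f.comp (powMonoidHom k) := by
    ext x
    simp
  have hrange : (powMonoidHom k : Q →* Q).range = (powMonoidHom k : P →* P).range.map f := by
    rw [← MonoidHom.range_comp, ← hcomm, MonoidHom.range_comp, f.range_eq_top_of_surjective hf,
      ← MonoidHom.range_eq_map]
  rw [hrange]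
  exact Subgroup.index_map_dvd _ hf

theorem index_range_powMonoidHom_pi_int (ι : Type*) [Fintype ι] (k : ℕ) :
    (powMonoidHom k : Multiplicative (ι → ℤ) →* _).range.index = k ^ Fintype.card ι := by
  show (nsmulAddMonoidHom k : (ι → ℤ) →+ (ι → ℤ)).range.index = _
  have hrange : (nsmulAddMonoidHom k : (ι → ℤ) →+ (ι → ℤ)).range =
      AddSubgroup.pi Set.univ (fun _ => AddSubgroup.zmultiples (k : ℤ)) := by
    ext v
    simp only [AddMonoidHom.mem_range, nsmulAddMonoidHom_apply, AddSubgroup.mem_pi, Set.mem_univ,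
      true_implies, Int.mem_zmultiples_iff]
    constructor
    · rintro ⟨w, rfl⟩ i
      exact ⟨w i, by simp⟩
    · intro h
      choose w hw using h
      exact ⟨w, funext fun i => by simp [← hw i]⟩
  simp [hrange]

open scoped IsMulCommutative in
theorem card_pow_eq_one_le_of_surjective {Q : Type*} [Group Q] [IsMulCommutative Q] [Finite Q]
    {n k : ℕ} (hk : k ≠ 0) {f : Multiplicative (Fin n → ℤ) →* Q} (hf : Surjective f) :
    Nat.card {q : Q // q ^ k = 1} ≤ k ^ n := by
  rw [card_pow_eq_one_eq_index_range_powMonoidHom]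
  have hdvd := index_range_powMonoidHom_dvd_of_surjective hf k
  rw [index_range_powMonoidHom_pi_int, Fintype.card_fin] at hdvd
  exact Nat.le_of_dvd (by positivity) hdvd

namespace Subgroup

variable {G : Type*} [Group G] (B : Subgroup G)

def centralizingRootFiber (q : G ⧸ B) : Set G :=
  {x | x ^ B.index = 1 ∧ x ∈ centralizer B ∧ (x : G ⧸ B) = q}

theorem nonempty_centralizingRootFiber_embedding (q : G ⧸ B) :
    Nonempty (B.centralizingRootFiber q ↪ {b : B // b ^ B.index = 1}) := by
  rcases isEmpty_or_nonempty (B.centralizingRootFiber q) with h | ⟨x₀, hx₀k, hx₀B, hx₀q⟩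
  · exact ⟨⟨isEmptyElim, isEmptyElim⟩⟩
  have hmem (y : B.centralizingRootFiber q) : x₀⁻¹ * y ∈ B :=
    QuotientGroup.eq.mp (hx₀q.trans y.2.2.2.symm)
  -- `x₀` commutes with `b = x₀⁻¹ * y`, so `1 = y ^ k = x₀ ^ k * b ^ k = b ^ k`.
  have hpow (y : B.centralizingRootFiber q) : (x₀⁻¹ * y) ^ B.index = 1 := by
    have hcomm : Commute x₀ (x₀⁻¹ * y) := ((mem_centralizer_iff.mp hx₀B) _ (hmem y)).symm
    have hmul := hcomm.mul_pow B.index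
    rwa [mul_inv_cancel_left, y.2.1, hx₀k, one_mul, eq_comm] at hmul
  refine ⟨⟨fun y => ⟨⟨x₀⁻¹ * y, hmem y⟩, Subtype.ext (by simpa using hpow y)⟩, ?_⟩⟩
  intro y z h
  exact Subtype.ext (by simpa using congrArg (fun b : {b : B // b ^ B.index = 1} => (b : G)) h)

open Classical in
noncomputable def fiberPoint (N : Subgroup G) (q : G ⧸ B) : Option (B.centralizingRootFiber q) :=
  if h : ∃ t : B.centralizingRootFiber q, (t : G) ∈ N then some h.choose else none

section InfEqBot

variable {B} {N : Subgroup G}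

theorem pow_index_eq_one_of_inf_eq_bot [B.Normal] (hNB : N ⊓ B = ⊥) {x : G} (hx : x ∈ N) :
    x ^ B.index = 1 := by
  have hmem : x ^ B.index ∈ N ⊓ B := ⟨N.pow_mem hx _, B.pow_index_mem x⟩
  rwa [hNB, mem_bot] at hmem

theorem le_centralizer_of_inf_eq_bot [N.Normal] [B.Normal] (hNB : N ⊓ B = ⊥) :
    N ≤ centralizer B :=
  commutator_eq_bot_iff_le_centralizer.mp (eq_bot_iff.mpr (hNB ▸ commutator_le_inf N B))

theorem eq_of_mk_eq_of_inf_eq_bot (hNB : N ⊓ B = ⊥) {x y : G} (hx : x ∈ N) (hy : y ∈ N)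
    (hxy : (x : G ⧸ B) = y) : x = y := by
  have hmem : x⁻¹ * y ∈ N ⊓ B := ⟨N.mul_mem (N.inv_mem hx) hy, QuotientGroup.eq.mp hxy⟩
  rwa [hNB, mem_bot, inv_mul_eq_one] at hmem

theorem mem_centralizingRootFiber_of_inf_eq_bot [N.Normal] [B.Normal] (hNB : N ⊓ B = ⊥)
    {x : G} (hx : x ∈ N) : x ∈ B.centralizingRootFiber x :=
  ⟨pow_index_eq_one_of_inf_eq_bot hNB hx, le_centralizer_of_inf_eq_bot hNB hx, rfl⟩

theorem mem_of_fiberPoint_eq_some {q : G ⧸ B} {t : B.centralizingRootFiber q}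
    (h : B.fiberPoint N q = some t) : (t : G) ∈ N := by
  unfold fiberPoint at h
  split_ifs at h with hex
  exact Option.some_injective _ h ▸ hex.choose_spec

theorem fiberPoint_eq_some [B.Normal] [N.Normal] (hNB : N ⊓ B = ⊥) {x : G} (hx : x ∈ N) :
    B.fiberPoint N x = some ⟨x, mem_centralizingRootFiber_of_inf_eq_bot hNB hx⟩ := by
  have hex : ∃ t : B.centralizingRootFiber x, (t : G) ∈ N :=
    ⟨⟨x, mem_centralizingRootFiber_of_inf_eq_bot hNB hx⟩, hx⟩
  rw [fiberPoint, dif_pos hex]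
  congr
  exact Subtype.ext (eq_of_mk_eq_of_inf_eq_bot hNB hex.choose_spec hx hex.choose.2.2.2)

theorem injOn_fiberPoint [B.Normal] :
    Set.InjOn B.fiberPoint {N : Subgroup G | N.Normal ∧ N ⊓ B = ⊥} := by
  have hle : ∀ N N' : Subgroup G, N.Normal → N ⊓ B = ⊥ →
      B.fiberPoint N = B.fiberPoint N' → N ≤ N' := by
    intro N N' hN hNB h x hx
    have hx' := fiberPoint_eq_some hNB hx
    rw [h] at hx'
    exact mem_of_fiberPoint_eq_some hx'
  intro N ⟨hN, hNB⟩ N' ⟨hN', hN'B⟩ h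
  exact le_antisymm (hle N N' hN hNB h) (hle N' N hN' hN'B h.symm)

end InfEqBot

theorem encard_setOf_normal_inf_eq_bot_le [B.Normal] [B.FiniteIndex]
    [Finite {b : B // b ^ B.index = 1}] :
    {N : Subgroup G | N.Normal ∧ N ⊓ B = ⊥}.encard ≤
      ((Nat.card {b : B // b ^ B.index = 1} + 1) ^ B.index : ℕ) := by
  classical
  have hfiber (q : G ⧸ B) := B.nonempty_centralizingRootFiber_embedding q
  have : ∀ q, Finite (B.centralizingRootFiber q) := fun q =>
    Finite.of_injective _ (hfiber q).some.injective
  have : Fintype (G ⧸ B) := Fintype.ofFinite _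
  have hcard : (Finset.univ : Finset (G ⧸ B)).card = B.index := by
    rw [Finset.card_univ, ← Nat.card_eq_fintype_card, index]
  calc {N : Subgroup G | N.Normal ∧ N ⊓ B = ⊥}.encard
      ≤ ENat.card ((q : G ⧸ B) → Option (B.centralizingRootFiber q)) :=
        ENat.card_le_card_of_injective injOn_fiberPoint.injective
    _ = ((∏ q : G ⧸ B, (Nat.card (B.centralizingRootFiber q) + 1) : ℕ) : ℕ∞) := by
        rw [ENat.card_eq_coe_natCard, Nat.card_pi]
        simp [Finite.card_option]
    _ ≤ ((Nat.card {b : B // b ^ B.index = 1} + 1) ^ B.index : ℕ) := by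
        rw [Nat.cast_le]
        refine (Finset.prod_le_pow_card _ _ _ fun q _ => ?_).trans_eq (by rw [hcard])
        exact Nat.add_le_add_right (Nat.card_le_card_of_injective _ (hfiber q).some.injective) 1

theorem encard_setOf_normal_inf_eq_le {H : Type*} [Group H] {A M : Subgroup H} [M.Normal]
    (hMA : M ≤ A) :
    {N : Subgroup H | N.Normal ∧ N ⊓ A = M}.encard ≤
      {N : Subgroup (H ⧸ M) | N.Normal ∧ N ⊓ A.map (mk' M) = ⊥}.encard := by
  have hM_le {N : Subgroup H} (hNA : N ⊓ A = M) : M ≤ N := hNA ▸ inf_le_left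
  refine Set.encard_le_encard_of_injOn (f := map (mk' M)) ?_ ?_
  · rintro N ⟨hN, hNA⟩
    refine ⟨hN.map _ (mk'_surjective M), comap_injective (mk'_surjective M) ?_⟩
    rw [comap_inf, comap_map_mk', comap_map_mk', sup_eq_right.mpr (hM_le hNA),
      sup_eq_right.mpr hMA, hNA, MonoidHom.comap_bot, ker_mk']
  · rintro N ⟨-, hNA⟩ N' ⟨-, hN'A⟩ h
    have hcomap := congrArg (comap (mk' M)) h
    rwa [comap_map_mk', comap_map_mk', sup_eq_right.mpr (hM_le hNA),
      sup_eq_right.mpr (hM_le hN'A)] at hcomap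

theorem encard_setOf_normal_inf_eq_le_of_mulEquiv {H : Type*} [Group H] {n : ℕ}
    {A M : Subgroup H} [A.Normal] [A.FiniteIndex] [M.Normal] [M.FiniteIndex] (hMA : M ≤ A)
    (e : A ≃* Multiplicative (Fin n → ℤ)) :
    {N : Subgroup H | N.Normal ∧ N ⊓ A = M}.encard ≤ ((A.index ^ n + 1) ^ A.index : ℕ) := by
  set f : Multiplicative (Fin n → ℤ) →* H ⧸ M := (mk' M).comp (A.subtype.comp e.symm.toMonoidHom)
  have hfA : f.range = A.map (mk' M) := by
    rw [MonoidHom.range_comp, MonoidHom.range_comp,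
      MonoidHom.range_eq_top_of_surjective _ e.symm.surjective, ← MonoidHom.range_eq_map,
      A.range_subtype]
  set B := f.range
  have : B.Normal := hfA ▸ Normal.map ‹_› _ (mk'_surjective M)
  have hBA : B.index = A.index := hfA ▸ A.index_map_eq (mk'_surjective M) (by rwa [ker_mk'])
  have : B.FiniteIndex := ⟨hBA ▸ A.index_ne_zero_of_finite⟩
  calc {N : Subgroup H | N.Normal ∧ N ⊓ A = M}.encard
      ≤ {N : Subgroup (H ⧸ M) | N.Normal ∧ N ⊓ B = ⊥}.encard :=
        hfA ▸ encard_setOf_normal_inf_eq_le hMA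
    _ ≤ ((Nat.card {b : B // b ^ B.index = 1} + 1) ^ B.index : ℕ) :=
        B.encard_setOf_normal_inf_eq_bot_le
    _ ≤ ((A.index ^ n + 1) ^ A.index : ℕ) := by
        rw [Nat.cast_le, ← hBA]
        gcongr
        exact card_pow_eq_one_le_of_surjective B.index_ne_zero_of_finite f.rangeRestrict_surjective

end Subgroup

theorem stmt12_general {H : Type*} [Group H] (n : ℕ)
    (A : Subgroup H) (hAnorm : A.Normal) (hAfin : A.FiniteIndex)
    (hAiso : Nonempty (A ≃* Multiplicative (Fin n → ℤ))) :
    ∃ C : ℕ, 0 < C ∧ ∀ M : Subgroup H, M ≤ A → (M.subgroupOf A).FiniteIndex →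
      {N : Subgroup H | N.Normal ∧ N ⊓ A = M}.ncard ≤ C := by
  obtain ⟨e⟩ := hAiso
  refine ⟨(A.index ^ n + 1) ^ A.index, by positivity, fun M hMA hMfin => ?_⟩
  rcases Set.eq_empty_or_nonempty {N : Subgroup H | N.Normal ∧ N ⊓ A = M} with h | ⟨N₀, hN₀, hN₀A⟩
  · simp [h]
  have : M.Normal := hN₀A ▸ Subgroup.normal_inf_normal N₀ A
  have : M.FiniteIndex := ⟨by
    rw [← Subgroup.relIndex_mul_index hMA]
    exact mul_ne_zero hMfin.index_ne_zero hAfin.index_ne_zero⟩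
  exact_mod_cast (Set.ncard_le_encard _).trans
    (Subgroup.encard_setOf_normal_inf_eq_le_of_mulEquiv hMA e)

/-- Let `n ≥ 3` and let `H` be a group with a finite-index normal subgroup
`A` isomorphic to `ℤⁿ`.  Then there is a constant `C > 0` such that for every finite-index
subgroup `𝒩` of `A`, the number of normal subgroups `N` of `H` with `N ∩ A = 𝒩` is at
most `C`. -/
theorem stmt12 {H : Type*} [Group H] (n : ℕ) (hn : 3 ≤ n)
    (A : Subgroup H) (hAnorm : A.Normal) (hAfin : A.FiniteIndex)
    (hAiso : Nonempty (A ≃* Multiplicative (Fin n → ℤ))) :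
    ∃ C : ℕ, 0 < C ∧ ∀ M : Subgroup H, M ≤ A → (M.subgroupOf A).FiniteIndex →
      {N : Subgroup H | N.Normal ∧ N ⊓ A = M}.ncard ≤ C :=
  stmt12_general n A hAnorm hAfin hAiso
end

section
/- Let n ≥ 3 and let H be a group generated by 2 elements with a normal subgroup A of finite index such that A is isomorphic to ℤⁿ. Then there exists an element h ∈ H whose conjugation action on A (an automorphism of A ≅ ℤⁿ) is neither the identity nor the inversion map x ↦ −x. -/
/-!
If every element of `H` acted on `A ≅ ℤⁿ` by `±1`, the action would be a character
`χ : H → ℤˣ`, and transfer would give a crossed homomorphism `δ : H → ℤⁿ` for `χ` whose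
restriction to `A` is a nonzero multiple of the identification `A ≅ ℤⁿ`: the transfer
`H → A` itself when `χ` is trivial, and otherwise `k ↦ τ k - τ (b k b⁻¹)` for the transfer
`τ : ker χ → A` and some `b ∉ ker χ`, extended from the index-two subgroup `ker χ` to `H`.
The values of such a `δ` on a group generated by `g₁, g₂` lie in the subgroup generated by
`δ g₁, δ g₂`, which has rank at most `2` and so cannot contain `m ℤⁿ` when `n ≥ 3`.
-/

open Module Subgroup

theorem finrank_le_card_of_forall_smul_mem_closure {M : Type*} [AddCommGroup M]
    [IsTorsionFree ℤ M] {m : ℤ} (hm : m ≠ 0) {s : Finset M}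
    (hs : ∀ z : M, m • z ∈ AddSubgroup.closure (s : Set M)) : finrank ℤ M ≤ s.card :=
  calc finrank ℤ M = finrank ℤ (LinearMap.range (m • LinearMap.id : M →ₗ[ℤ] M)) :=
        (LinearMap.finrank_range_of_inj (smul_right_injective M hm)).symm
    _ ≤ finrank ℤ (Submodule.span ℤ (s : Set M)) := by
        refine Submodule.finrank_mono ?_
        rintro _ ⟨z, rfl⟩
        rw [← Submodule.mem_toAddSubgroup, Submodule.span_int_eq_addSubgroupClosure]
        exact hs z
    _ ≤ s.card := finrank_span_finset_le_card s

theorem not_forall_smul_mem_closure_pair {n : ℕ} (hn : 3 ≤ n) {m : ℤ} (hm : m ≠ 0)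
    (u w : Fin n → ℤ) : ¬ ∀ z : Fin n → ℤ, m • z ∈ AddSubgroup.closure {u, w} := by
  classical
  intro h
  have hrank := finrank_le_card_of_forall_smul_mem_closure hm (s := {u, w}) (by simpa using h)
  rw [finrank_fin_fun] at hrank
  have hcard := Finset.card_le_two (a := u) (b := w)
  omega

section CrossedHom

variable {G V : Type*} [Group G] [AddCommGroup V]

def IsCrossedHom (χ : G →* ℤˣ) (δ : G → V) : Prop :=
  ∀ x y, δ (x * y) = δ x + χ x • δ y

theorem IsCrossedHom.map_one {χ : G →* ℤˣ} {δ : G → V} (hδ : IsCrossedHom χ δ) : δ 1 = 0 := by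
  simpa using hδ 1 1

theorem IsCrossedHom.mem_closure_image {χ : G →* ℤˣ} {δ : G → V} (hδ : IsCrossedHom χ δ)
    {S : Set G} {g : G} (hg : g ∈ closure S) : δ g ∈ AddSubgroup.closure (δ '' S) := by
  induction hg using Subgroup.closure_induction with
  | mem x hx => exact AddSubgroup.subset_closure (Set.mem_image_of_mem δ hx)
  | one => exact hδ.map_one ▸ zero_mem _
  | mul x y _ _ hx hy =>
    rw [hδ, Units.smul_def]
    exact add_mem hx (zsmul_mem hy _)
  | inv x _ hx =>
    have h : δ x⁻¹ = -(χ x⁻¹ • δ x) := by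
      rw [eq_neg_iff_add_eq_zero, ← hδ, inv_mul_cancel, hδ.map_one]
    rw [h, Units.smul_def]
    exact neg_mem (zsmul_mem hx _)

namespace Subgroup

variable {K : Subgroup G}

open scoped Classical in
noncomputable def indexTwoSign (hK : K.index = 2) : G →* ℤˣ where
  toFun g := if g ∈ K then 1 else -1
  map_one' := if_pos K.one_mem
  map_mul' x y := by
    rw [mul_mem_iff_of_index_two hK]
    by_cases hx : x ∈ K <;> by_cases hy : y ∈ K <;> simp [hx, hy]

theorem indexTwoSign_apply_of_mem (hK : K.index = 2) {g : G} (hg : g ∈ K) :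
    K.indexTwoSign hK g = 1 := if_pos hg

theorem indexTwoSign_apply_of_notMem (hK : K.index = 2) {g : G} (hg : g ∉ K) :
    K.indexTwoSign hK g = -1 := if_neg hg

theorem exists_isCrossedHom_indexTwoSign_of_conj_eq_neg (hK : K.index = 2) {b : G} (hb : b ∉ K) {E : G → V}
    (hE : ∀ x ∈ K, ∀ y ∈ K, E (x * y) = E x + E y) (hEconj : ∀ x ∈ K, E (b * x * b⁻¹) = -E x)
    (hEsq : E (b * b) = 0) :
    ∃ δ : G → V, IsCrossedHom (K.indexTwoSign hK) δ ∧ ∀ x ∈ K, δ x = E x := by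
  classical
  have mem_iff x y : x * y ∈ K ↔ (x ∈ K ↔ y ∈ K) := mul_mem_iff_of_index_two hK
  have hb' : b⁻¹ ∉ K := by rwa [inv_mem_iff]
  refine ⟨fun g => if g ∈ K then E g else E (g * b⁻¹), fun x y => ?_, fun x hx => if_pos hx⟩
  by_cases hx : x ∈ K <;> by_cases hy : y ∈ K
  · have hxy : x * y ∈ K := mul_mem hx hy
    simp only [hx, hy, hxy, ite_true, indexTwoSign_apply_of_mem hK hx, one_smul, hE x hx y hy]
  · have hxy : x * y ∉ K := by simp [mem_iff, hx, hy]
    have hyb : y * b⁻¹ ∈ K := by simp [mem_iff, hy, hb']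
    simp only [hx, hy, hxy, ite_true, ite_false, indexTwoSign_apply_of_mem hK hx, one_smul,
      mul_assoc, hE x hx _ hyb]
  · have hxy : x * y ∉ K := by simp [mem_iff, hx, hy]
    have hxb : x * b⁻¹ ∈ K := by simp [mem_iff, hx, hb']
    have hyc : b * y * b⁻¹ ∈ K := by simp [mem_iff, hy, hb, hb']
    simp only [hx, hy, hxy, ite_true, ite_false, indexTwoSign_apply_of_notMem hK hx,
      Units.neg_smul, one_smul]
    rw [show x * y * b⁻¹ = x * b⁻¹ * (b * y * b⁻¹) by group, hE _ hxb _ hyc, hEconj y hy]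
  · have hxy : x * y ∈ K := by simp [mem_iff, hx, hy]
    have hxb : x * b⁻¹ ∈ K := by simp [mem_iff, hx, hb']
    have hyb : y * b⁻¹ ∈ K := by simp [mem_iff, hy, hb']
    have hyc : b * (y * b⁻¹) * b⁻¹ ∈ K := by simp [mem_iff, hy, hb, hb']
    have hbb : b * b ∈ K := by simp [mem_iff, hb]
    simp only [hx, hy, hxy, ite_true, ite_false, indexTwoSign_apply_of_notMem hK hx,
      Units.neg_smul, one_smul]
    rw [show x * y = x * b⁻¹ * (b * (y * b⁻¹) * b⁻¹ * (b * b)) by group,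
      hE _ hxb _ (mul_mem hyc hbb), hE _ hyc _ hbb, hEconj _ hyb, hEsq, add_zero]

theorem exists_isCrossedHom_indexTwoSign_sub_conj (hK : K.index = 2) {b : G} (hb : b ∉ K) {F : G → V}
    (hF : ∀ x ∈ K, ∀ y ∈ K, F (x * y) = F x + F y) :
    ∃ δ : G → V, IsCrossedHom (K.indexTwoSign hK) δ ∧ ∀ x ∈ K, δ x = F x - F (b * x * b⁻¹) := by
  have hN := normal_of_index_eq_two hK
  have hbb : b * b ∈ K := by simp [mul_mem_iff_of_index_two hK, hb]
  have hF_one : F 1 = 0 := by simpa using hF 1 K.one_mem 1 K.one_mem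
  have hF_conj : ∀ x ∈ K, ∀ y ∈ K, F (x * y * x⁻¹) = F y := fun x hx y hy => by
    have h := hF _ hx _ (inv_mem hx)
    rw [mul_inv_cancel, hF_one] at h
    rw [hF _ (mul_mem hx hy) _ (inv_mem hx), hF _ hx _ hy, add_right_comm, ← h, zero_add]
  refine exists_isCrossedHom_indexTwoSign_of_conj_eq_neg hK hb (fun x hx y hy => ?_) (fun x hx => ?_) ?_
  · rw [show b * (x * y) * b⁻¹ = b * x * b⁻¹ * (b * y * b⁻¹) by group, hF x hx y hy,
      hF _ (hN.conj_mem x hx b) _ (hN.conj_mem y hy b)]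
    abel
  · rw [show b * (b * x * b⁻¹) * b⁻¹ = b * b * x * (b * b)⁻¹ by group, hF_conj _ hbb _ hx]
    abel
  · rw [show b * (b * b) * b⁻¹ = b * b by group, sub_self]

end Subgroup

end CrossedHom

theorem MonoidHom.transfer_apply_of_le_center {G M : Type*} [Group G] [CommGroup M]
    {A : Subgroup G} [A.FiniteIndex] (hA : A ≤ center G) (ϕ : A →* M) (a : A) :
    transfer ϕ a = ϕ a ^ A.index := by
  rw [transfer_eq_pow ϕ a fun k g _ => ?_, ← map_pow]
  · rfl
  · rw [mul_assoc, ← mem_center_iff.mp (hA (pow_mem a.2 k)) g, inv_mul_cancel_left]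

theorem mem_centralizer_iff_conj {G : Type*} [Group G] {g : G} {s : Set G} :
    g ∈ centralizer s ↔ ∀ a ∈ s, g * a * g⁻¹ = a := by
  rw [mem_centralizer_iff]
  exact forall₂_congr fun a _ => by rw [mul_inv_eq_iff_eq_mul, eq_comm]

section Transfer

variable {H V : Type*} [Group H] [AddCommGroup V] {A : Subgroup H} [A.FiniteIndex]

theorem exists_isCrossedHom_of_le_center (hA : A ≤ center H) (e : A ≃* Multiplicative V) :
    ∃ δ : H → V, IsCrossedHom 1 δ ∧ ∀ a : A, δ a = A.index • Multiplicative.toAdd (e a) :=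
  ⟨fun h => Multiplicative.toAdd (MonoidHom.transfer e.toMonoidHom h),
    fun x y => by simp,
    fun a => by simp [MonoidHom.transfer_apply_of_le_center hA]⟩

theorem exists_isCrossedHom_of_conj_eq_inv {K : Subgroup H} (hK : K.index = 2) (hAK : A ≤ K)
    (hKA : K ≤ centralizer A) {b : H} (hb : b ∉ K) (hbA : ∀ a ∈ A, b * a * b⁻¹ = a⁻¹)
    (e : A ≃* Multiplicative V) :
    ∃ δ : H → V, IsCrossedHom (K.indexTwoSign hK) δ ∧
      ∀ a : A, δ a = (2 * A.relIndex K) • Multiplicative.toAdd (e a) := by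
  classical
  have hA_center : A.subgroupOf K ≤ center K := fun a ha =>
    mem_center_iff.mpr fun k => Subtype.ext (hKA k.2 a ha).symm
  obtain ⟨τ, hτ⟩ : ∃ τ : K →* Multiplicative V, ∀ a (ha : a ∈ A),
      τ ⟨a, hAK ha⟩ = e ⟨a, ha⟩ ^ A.relIndex K :=
    ⟨_, fun a ha => MonoidHom.transfer_apply_of_le_center hA_center
      (e.toMonoidHom.comp (subgroupOfEquivOfLe hAK).toMonoidHom) ⟨⟨a, hAK ha⟩, ha⟩⟩
  let F : H → V := fun h => if hh : h ∈ K then Multiplicative.toAdd (τ ⟨h, hh⟩) else 0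
  have hF : ∀ x ∈ K, ∀ y ∈ K, F (x * y) = F x + F y := fun x hx y hy => by
    simp only [F, dif_pos hx, dif_pos hy, dif_pos (mul_mem hx hy)]
    exact congrArg Multiplicative.toAdd (map_mul τ ⟨x, hx⟩ ⟨y, hy⟩)
  have hF_A : ∀ a (ha : a ∈ A), F a = A.relIndex K • Multiplicative.toAdd (e ⟨a, ha⟩) :=
    fun a ha => by simp only [F, dif_pos (hAK ha), hτ a ha, toAdd_pow]
  obtain ⟨δ, hδ, hδK⟩ := Subgroup.exists_isCrossedHom_indexTwoSign_sub_conj hK hb hF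
  refine ⟨δ, hδ, fun a => ?_⟩
  rw [hδK a (hAK a.2), hbA a a.2, hF_A a a.2, hF_A _ (inv_mem a.2)]
  change _ - _ • Multiplicative.toAdd (e a⁻¹) = _
  rw [map_inv, toAdd_inv, smul_neg, sub_neg_eq_add, ← two_nsmul, mul_nsmul']

theorem exists_isCrossedHom_restrict_eq_nsmul (e : A ≃* Multiplicative V)
    (hsign : ∀ h : H, (∀ a ∈ A, h * a * h⁻¹ = a) ∨ ∀ a ∈ A, h * a * h⁻¹ = a⁻¹) :
    ∃ (χ : H →* ℤˣ) (δ : H → V) (m : ℕ), m ≠ 0 ∧ IsCrossedHom χ δ ∧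
      ∀ a : A, δ a = m • Multiplicative.toAdd (e a) := by
  have hA_comm : A ≤ centralizer A := fun x hx => mem_centralizer_iff.mpr fun y hy =>
    congrArg Subtype.val (e.injective (by rw [map_mul, map_mul, mul_comm]) :
      (⟨y, hy⟩ * ⟨x, hx⟩ : A) = ⟨x, hx⟩ * ⟨y, hy⟩)
  have inverts : ∀ h ∉ centralizer A, ∀ a ∈ A, h * a * h⁻¹ = a⁻¹ := fun h hh =>
    (hsign h).resolve_left (mt mem_centralizer_iff_conj.mpr hh)
  by_cases hc : ∀ h : H, h ∈ centralizer A
  · have hA_center : A ≤ center H := fun a ha =>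
      mem_center_iff.mpr fun g => (mem_centralizer_iff.mp (hc g) a ha).symm
    obtain ⟨δ, hδ, hδA⟩ := exists_isCrossedHom_of_le_center hA_center e
    exact ⟨1, δ, A.index, FiniteIndex.index_ne_zero, hδ, hδA⟩
  · obtain ⟨b, hb⟩ := not_forall.mp hc
    have hK : (centralizer A).index = 2 := index_eq_two_iff'.mpr ⟨b, fun h => by
      by_cases hh : h ∈ centralizer A
      · exact Or.inr ⟨hh, fun hbh => hb ((mul_mem_cancel_right hh).mp hbh)⟩
      · refine Or.inl ⟨mem_centralizer_iff_conj.mpr fun a ha => ?_, hh⟩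
        rw [show b * h * a * (b * h)⁻¹ = b * (h * a * h⁻¹) * b⁻¹ by group, inverts h hh a ha,
          inverts b hb _ (inv_mem ha), inv_inv]⟩
    obtain ⟨δ, hδ, hδA⟩ := exists_isCrossedHom_of_conj_eq_inv hK hA_comm le_rfl hb (inverts b hb) e
    exact ⟨_, δ, _, mul_ne_zero two_ne_zero FiniteIndex.index_ne_zero, hδ, hδA⟩

end Transfer

theorem stmt13_general {H : Type*} [Group H] (n : ℕ) (hn : 3 ≤ n)
    (hgen2 : ∃ a b : H, Subgroup.closure {a, b} = ⊤)
    (A : Subgroup H) (hAfin : A.FiniteIndex)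
    (hAiso : Nonempty (A ≃* Multiplicative (Fin n → ℤ))) :
    ∃ h : H, ¬ (∀ a ∈ A, h * a * h⁻¹ = a) ∧ ¬ (∀ a ∈ A, h * a * h⁻¹ = a⁻¹) := by
  obtain ⟨g₁, g₂, hgen⟩ := hgen2
  obtain ⟨e⟩ := hAiso
  by_contra hcon
  have hsign : ∀ h : H, (∀ a ∈ A, h * a * h⁻¹ = a) ∨ ∀ a ∈ A, h * a * h⁻¹ = a⁻¹ := fun h => by
    by_contra h'
    exact hcon ⟨h, not_or.mp h'⟩
  obtain ⟨_, δ, m, hm, hδ, hδA⟩ := exists_isCrossedHom_restrict_eq_nsmul e hsign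
  refine not_forall_smul_mem_closure_pair hn (Int.natCast_ne_zero.mpr hm) (δ g₁) (δ g₂)
    fun z => ?_
  have h := hδ.mem_closure_image (hgen ▸ mem_top (e.symm (Multiplicative.ofAdd z) : H))
  rwa [hδA, MulEquiv.apply_symm_apply, toAdd_ofAdd, Set.image_pair, ← natCast_zsmul] at h

/-- Let `n ≥ 3` and let `H` be a `2`-generated group with a finite-index
normal subgroup `A` isomorphic to `ℤⁿ`.  Then there is an `h ∈ H` whose conjugation action
on `A` is neither the identity nor the inversion map `x ↦ x⁻¹` (i.e. `x ↦ −x` in additive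
notation for `A ≅ ℤⁿ`). -/
theorem stmt13 {H : Type*} [Group H] (n : ℕ) (hn : 3 ≤ n)
    (hgen2 : ∃ a b : H, Subgroup.closure {a, b} = ⊤)
    (A : Subgroup H) (hAnorm : A.Normal) (hAfin : A.FiniteIndex)
    (hAiso : Nonempty (A ≃* Multiplicative (Fin n → ℤ))) :
    ∃ h : H, ¬ (∀ a ∈ A, h * a * h⁻¹ = a) ∧ ¬ (∀ a ∈ A, h * a * h⁻¹ = a⁻¹) :=
  stmt13_general n hn hgen2 A hAfin hAiso
end
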